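/- arXiv:1603.02088 — 15 statements merged into one kernel-verified Lean document; each statement's English description precedes it below -/
import Mathlib

section
/- If (α, β) ∈ ℝ² satisfies (c₁/c) k a_θ α > α² + β² (the region 𝒟_T), then Q_T^θ(α, β) = 4 c₁ k (a_θ α − b_θ β) + c₁ k² (2 − (c₁/c) a_θ²) + ē_T, and the infimum defining Q_T^θ(α, β) is attained at γ = (c₁/c) k a_θ − α. -/
/-- Twist-case context: `c = c₁ + c₂`, `aθ = cos 2θ`, `bθ = sin 2θ`,
`f α β γ = c(α² + 2β² + γ²) + 2c|αγ − β²| + 2c₁ k aθ (α − γ) − 4c₁ k bθ β + 2c₁k² + ē_T`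
and `Q α β = ⨅ γ, f α β γ`. -/
theorem stmt0 (c₁ c₂ k θ eT : ℝ) (hc₁ : 0 < c₁) (hc₂ : 0 < c₂)
    (hθ : 0 ≤ θ ∧ θ < Real.pi) (heT : 0 ≤ eT)
    (c aθ bθ : ℝ) (hc : c = c₁ + c₂)
    (haθ : aθ = Real.cos (2 * θ)) (hbθ : bθ = Real.sin (2 * θ))
    (f : ℝ → ℝ → ℝ → ℝ)
    (hf : ∀ α β γ : ℝ, f α β γ =
      c * (α ^ 2 + 2 * β ^ 2 + γ ^ 2) + 2 * c * |α * γ - β ^ 2|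
        + 2 * c₁ * k * aθ * (α - γ) - 4 * c₁ * k * bθ * β + 2 * c₁ * k ^ 2 + eT)
    (Q : ℝ → ℝ → ℝ) (hQ : ∀ α β : ℝ, Q α β = ⨅ γ : ℝ, f α β γ)
    (α β : ℝ) (hreg : (c₁ / c) * k * aθ * α > α ^ 2 + β ^ 2) :
    Q α β = 4 * c₁ * k * (aθ * α - bθ * β) + c₁ * k ^ 2 * (2 - (c₁ / c) * aθ ^ 2) + eT ∧
    f α β ((c₁ / c) * k * aθ - α) = Q α β := by
  have hcpos : (0:ℝ) < c := by rw [hc]; linarith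
  have hcne : c ≠ 0 := ne_of_gt hcpos
  set t : ℝ := (c₁ / c) * k * aθ with ht
  have hct : c * t = c₁ * k * aθ := by
    rw [ht]; field_simp
  have ht3 : c₁ * k ^ 2 * ((c₁ / c) * aθ ^ 2) = c * t ^ 2 := by
    rw [ht]; field_simp
  clear_value t
  -- value at the minimizer
  have habs : α * (t - α) - β ^ 2 > 0 := by nlinarith [hreg]
  have hval : f α β (t - α) =
      4 * c₁ * k * (aθ * α - bθ * β) + c₁ * k ^ 2 * (2 - (c₁ / c) * aθ ^ 2) + eT := by
    rw [hf, abs_of_pos habs]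
    linear_combination (2 * t) * hct + ht3
  -- lower bound
  have key : ∀ γ : ℝ, f α β (t - α) ≤ f α β γ := by
    intro γ
    have h1 : α * γ - β ^ 2 ≤ |α * γ - β ^ 2| := le_abs_self _
    have hsq : 0 ≤ c * (γ - (t - α)) ^ 2 := by positivity
    have heq : f α β (t - α) + c * (γ - (t - α)) ^ 2
        + 2 * c * (|α * γ - β ^ 2| - (α * γ - β ^ 2)) = f α β γ := by
      rw [hf, hf, abs_of_pos habs]
      linear_combination (2 * t - 2 * α - 2 * γ) * hct
    have h2 : 0 ≤ 2 * c * (|α * γ - β ^ 2| - (α * γ - β ^ 2)) := by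
      have : 0 ≤ |α * γ - β ^ 2| - (α * γ - β ^ 2) := by linarith
      positivity
    linarith
  have hQv : Q α β = f α β (t - α) := by
    rw [hQ]
    refine le_antisymm (ciInf_le ⟨f α β (t - α), ?_⟩ (t - α)) (le_ciInf key)
    rintro x ⟨γ, rfl⟩
    exact key γ
  exact ⟨hQv.trans hval, hQv.symm⟩
end

section
/- If (α, β) ∈ ℝ² satisfies (c₁/c) k a_θ α ≤ β² − α² (the region 𝒰_T), then Q_T^θ(α, β) = 4(c β² − c₁ k b_θ β) + c₁ k² (2 − (c₁/c) a_θ²) + ē_T. -/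
/-- Twist-case context: `c = c₁ + c₂`, `aθ = cos 2θ`, `bθ = sin 2θ`,
`f α β γ = c(α² + 2β² + γ²) + 2c|αγ − β²| + 2c₁ k aθ (α − γ) − 4c₁ k bθ β + 2c₁k² + ē_T`
and `Q α β = ⨅ γ, f α β γ`. -/
theorem stmt1 (c₁ c₂ k θ eT : ℝ) (hc₁ : 0 < c₁) (hc₂ : 0 < c₂)
    (hθ : 0 ≤ θ ∧ θ < Real.pi) (heT : 0 ≤ eT)
    (c aθ bθ : ℝ) (hc : c = c₁ + c₂)
    (haθ : aθ = Real.cos (2 * θ)) (hbθ : bθ = Real.sin (2 * θ))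
    (f : ℝ → ℝ → ℝ → ℝ)
    (hf : ∀ α β γ : ℝ, f α β γ =
      c * (α ^ 2 + 2 * β ^ 2 + γ ^ 2) + 2 * c * |α * γ - β ^ 2|
        + 2 * c₁ * k * aθ * (α - γ) - 4 * c₁ * k * bθ * β + 2 * c₁ * k ^ 2 + eT)
    (Q : ℝ → ℝ → ℝ) (hQ : ∀ α β : ℝ, Q α β = ⨅ γ : ℝ, f α β γ)
    (α β : ℝ) (hreg : (c₁ / c) * k * aθ * α ≤ β ^ 2 - α ^ 2) :
    Q α β = 4 * (c * β ^ 2 - c₁ * k * bθ * β) + c₁ * k ^ 2 * (2 - (c₁ / c) * aθ ^ 2) + eT := by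
  have hc0 : 0 < c := by rw [hc]; linarith
  have hcne : c ≠ 0 := ne_of_gt hc0
  set m := 4 * (c * β ^ 2 - c₁ * k * bθ * β) + c₁ * k ^ 2 * (2 - (c₁ / c) * aθ ^ 2) + eT with hm
  set γ0 := α + (c₁ / c) * k * aθ with hγ0
  clear_value m γ0
  have hle : α * γ0 ≤ β ^ 2 := by
    have h1 : α * γ0 = α ^ 2 + (c₁ / c) * k * aθ * α := by rw [hγ0]; ring
    nlinarith [hreg, h1]
  have habs : |α * γ0 - β ^ 2| = β ^ 2 - α * γ0 := by
    rw [abs_of_nonpos (by linarith)]; ring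
  have hd : c * (c₁ / c) = c₁ := by field_simp
  have hval : f α β γ0 = m := by
    rw [hf, habs, hγ0, hm]
    field_simp
    ring
  have hlow : ∀ γ : ℝ, m ≤ f α β γ := by
    intro γ
    rw [hf]
    have h1 : -(α * γ - β ^ 2) ≤ |α * γ - β ^ 2| := neg_le_abs _
    have h2 : 0 ≤ c * (γ - γ0) ^ 2 := mul_nonneg hc0.le (sq_nonneg _)
    have h3 : c * (γ - γ0) ^ 2 = c * γ ^ 2 - 2 * c * α * γ - 2 * c₁ * k * aθ * γ
        + c * α ^ 2 + 2 * c₁ * k * aθ * α + c₁ * (c₁ / c) * k ^ 2 * aθ ^ 2 := by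
      rw [hγ0]
      field_simp
      ring
    nlinarith [h1, h2, h3]
  rw [hQ]
  refine le_antisymm ?_ (le_ciInf hlow)
  have hbdd : BddBelow (Set.range fun γ => f α β γ) := by
    refine ⟨m, ?_⟩
    rintro x ⟨γ, rfl⟩
    exact hlow γ
  calc (⨅ γ : ℝ, f α β γ) ≤ f α β γ0 := ciInf_le hbdd γ0
    _ = m := hval
end

section
/- If (α, β) ∈ ℝ² satisfies β² − α² < (c₁/c) k a_θ α ≤ α² + β² (the region 𝒱_T; note that this forces α ≠ 0), then Q_T^θ(α, β) = c(α² + β²)²/α² + 2 c₁ k (a_θ (α² − β²)/α − 2 b_θ β) + 2 c₁ k² + ē_T, and the infimum defining Q_T^θ(α, β) is attained at γ = β²/α. -/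
/-!
Only the part `γ² + 2|αγ − β²| − 2pγ` of `f α β γ / c` depends on `γ`, where `p = (c₁/c) k a_θ`.
With `u = αγ − β²`, its excess over the value at `γ = β²/α` is
`(u² + 2(β² − pα)u + 2α²|u|) / α²`, which is nonnegative exactly because the region `𝒱_T`
says `|pα − β²| ≤ α²`.
-/

lemma sq_add_two_mul_add_two_mul_abs_nonneg {m a : ℝ} (h : |m| ≤ a) (u : ℝ) :
    0 ≤ u ^ 2 + 2 * m * u + 2 * a * |u| := by
  have hmu : -(|m| * |u|) ≤ m * u := by
    rw [← abs_mul]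
    exact neg_abs_le _
  nlinarith [sq_nonneg u, abs_nonneg u]

def reducedEnergy (α β p γ : ℝ) : ℝ :=
  γ ^ 2 + 2 * |α * γ - β ^ 2| - 2 * p * γ

lemma reducedEnergy_sub_mul_sq {α : ℝ} (hα : α ≠ 0) (β p γ : ℝ) :
    (reducedEnergy α β p γ - reducedEnergy α β p (β ^ 2 / α)) * α ^ 2 =
      (α * γ - β ^ 2) ^ 2 + 2 * (β ^ 2 - p * α) * (α * γ - β ^ 2)
        + 2 * α ^ 2 * |α * γ - β ^ 2| := by
  simp only [reducedEnergy, mul_div_cancel₀ _ hα, sub_self, abs_zero]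
  field_simp
  ring

lemma isMinOn_reducedEnergy {α β p : ℝ} (hα : α ≠ 0) (hp : |p * α - β ^ 2| ≤ α ^ 2) :
    IsMinOn (reducedEnergy α β p) Set.univ (β ^ 2 / α) := by
  refine isMinOn_univ_iff.2 fun γ => ?_
  have hm : |β ^ 2 - p * α| ≤ α ^ 2 := by rwa [abs_sub_comm]
  have hprod := reducedEnergy_sub_mul_sq hα β p γ ▸
    sq_add_two_mul_add_two_mul_abs_nonneg hm (α * γ - β ^ 2)
  have hα2 : 0 < α ^ 2 := by positivity
  nlinarith

theorem stmt2_general (c₁ c₂ k eT : ℝ) (hc₁ : 0 < c₁) (hc₂ : 0 < c₂)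
    (c aθ bθ : ℝ) (hc : c = c₁ + c₂)
    (f : ℝ → ℝ → ℝ → ℝ)
    (hf : ∀ α β γ : ℝ, f α β γ =
      c * (α ^ 2 + 2 * β ^ 2 + γ ^ 2) + 2 * c * |α * γ - β ^ 2|
        + 2 * c₁ * k * aθ * (α - γ) - 4 * c₁ * k * bθ * β + 2 * c₁ * k ^ 2 + eT)
    (Q : ℝ → ℝ → ℝ) (hQ : ∀ α β : ℝ, Q α β = ⨅ γ : ℝ, f α β γ)
    (α β : ℝ) (hreg₁ : β ^ 2 - α ^ 2 < (c₁ / c) * k * aθ * α)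
    (hreg₂ : (c₁ / c) * k * aθ * α ≤ α ^ 2 + β ^ 2) :
    α ≠ 0 ∧
    Q α β = c * (α ^ 2 + β ^ 2) ^ 2 / α ^ 2
      + 2 * c₁ * k * (aθ * (α ^ 2 - β ^ 2) / α - 2 * bθ * β) + 2 * c₁ * k ^ 2 + eT ∧
    f α β (β ^ 2 / α) = Q α β := by
  have hcpos : 0 < c := by linarith
  have hα : α ≠ 0 := by
    rintro rfl
    nlinarith [sq_nonneg β]
  set p := (c₁ / c) * k * aθ
  set K := c * (α ^ 2 + 2 * β ^ 2) + 2 * c₁ * k * aθ * α - 4 * c₁ * k * bθ * β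
    + 2 * c₁ * k ^ 2 + eT
  have hdecomp : ∀ γ, f α β γ = K + c * reducedEnergy α β p γ := by
    intro γ
    simp only [hf, reducedEnergy, K, p]
    field_simp
    ring
  have hmin : ∀ γ, f α β (β ^ 2 / α) ≤ f α β γ := by
    intro γ
    rw [hdecomp, hdecomp]
    gcongr
    exact isMinOn_univ_iff.1 (isMinOn_reducedEnergy hα (abs_le.2 ⟨by linarith, by linarith⟩)) γ
  have hQ_eq : Q α β = f α β (β ^ 2 / α) :=
    (hQ α β).trans (ciInf_eq_of_forall_ge_of_forall_gt_exists_lt hmin fun _ hw => ⟨_, hw⟩)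
  refine ⟨hα, ?_, hQ_eq.symm⟩
  rw [hQ_eq, hf, mul_div_cancel₀ _ hα, sub_self, abs_zero]
  field_simp
  ring

/-- Twist-case context: `c = c₁ + c₂`, `aθ = cos 2θ`, `bθ = sin 2θ`,
`f α β γ = c(α² + 2β² + γ²) + 2c|αγ − β²| + 2c₁ k aθ (α − γ) − 4c₁ k bθ β + 2c₁k² + ē_T`
and `Q α β = ⨅ γ, f α β γ`. -/
theorem stmt2 (c₁ c₂ k θ eT : ℝ) (hc₁ : 0 < c₁) (hc₂ : 0 < c₂)
    (hθ : 0 ≤ θ ∧ θ < Real.pi) (heT : 0 ≤ eT)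
    (c aθ bθ : ℝ) (hc : c = c₁ + c₂)
    (haθ : aθ = Real.cos (2 * θ)) (hbθ : bθ = Real.sin (2 * θ))
    (f : ℝ → ℝ → ℝ → ℝ)
    (hf : ∀ α β γ : ℝ, f α β γ =
      c * (α ^ 2 + 2 * β ^ 2 + γ ^ 2) + 2 * c * |α * γ - β ^ 2|
        + 2 * c₁ * k * aθ * (α - γ) - 4 * c₁ * k * bθ * β + 2 * c₁ * k ^ 2 + eT)
    (Q : ℝ → ℝ → ℝ) (hQ : ∀ α β : ℝ, Q α β = ⨅ γ : ℝ, f α β γ)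
    (α β : ℝ) (hreg₁ : β ^ 2 - α ^ 2 < (c₁ / c) * k * aθ * α)
    (hreg₂ : (c₁ / c) * k * aθ * α ≤ α ^ 2 + β ^ 2) :
    α ≠ 0 ∧
    Q α β = c * (α ^ 2 + β ^ 2) ^ 2 / α ^ 2
      + 2 * c₁ * k * (aθ * (α ^ 2 - β ^ 2) / α - 2 * bθ * β) + 2 * c₁ * k ^ 2 + eT ∧
    f α β (β ^ 2 / α) = Q α β :=
  stmt2_general c₁ c₂ k eT hc₁ hc₂ c aθ bθ hc f hf Q hQ α β hreg₁ hreg₂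
end

section
/- Assume k > 0. Set β_θ = (k c₁/(2c)) sin(2θ), α_{θ,1}^T = −(k c₁/(2c))(1 + cos(2θ)) and α_{θ,2}^T = (k c₁/(2c))(1 − cos(2θ)). Then for every α ∈ [α_{θ,1}^T, α_{θ,2}^T] one has Q_T^θ(α, β_θ) = c₁ k² (2 − c₁/c) + ē_T, and for every (α', β') ∈ ℝ² one has Q_T^θ(α', β') ≥ c₁ k² (2 − c₁/c) + ē_T; in particular min_{ℝ²} Q_T^θ = c₁ k² (2 − c₁/c) + ē_T. -/
set_option maxHeartbeats 1000000 in
/-- Twist-case context: `c = c₁ + c₂`, `aθ = cos 2θ`, `bθ = sin 2θ`,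
`f α β γ = c(α² + 2β² + γ²) + 2c|αγ − β²| + 2c₁ k aθ (α − γ) − 4c₁ k bθ β + 2c₁k² + ē_T`
and `Q α β = ⨅ γ, f α β γ`. -/
theorem stmt4 (c₁ c₂ k θ eT : ℝ) (hc₁ : 0 < c₁) (hc₂ : 0 < c₂)
    (hθ : 0 ≤ θ ∧ θ < Real.pi) (heT : 0 ≤ eT)
    (c aθ bθ : ℝ) (hc : c = c₁ + c₂)
    (haθ : aθ = Real.cos (2 * θ)) (hbθ : bθ = Real.sin (2 * θ))
    (f : ℝ → ℝ → ℝ → ℝ)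
    (hf : ∀ α β γ : ℝ, f α β γ =
      c * (α ^ 2 + 2 * β ^ 2 + γ ^ 2) + 2 * c * |α * γ - β ^ 2|
        + 2 * c₁ * k * aθ * (α - γ) - 4 * c₁ * k * bθ * β + 2 * c₁ * k ^ 2 + eT)
    (Q : ℝ → ℝ → ℝ) (hQ : ∀ α β : ℝ, Q α β = ⨅ γ : ℝ, f α β γ)
    (hk : 0 < k) (βθ α₁ α₂ : ℝ)
    (hβθ : βθ = (k * c₁ / (2 * c)) * Real.sin (2 * θ))
    (hα₁ : α₁ = -((k * c₁ / (2 * c)) * (1 + Real.cos (2 * θ))))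
    (hα₂ : α₂ = (k * c₁ / (2 * c)) * (1 - Real.cos (2 * θ))) :
    (∀ α ∈ Set.Icc α₁ α₂, Q α βθ = c₁ * k ^ 2 * (2 - c₁ / c) + eT) ∧
    (∀ α' β' : ℝ, c₁ * k ^ 2 * (2 - c₁ / c) + eT ≤ Q α' β') := by
  subst haθ hbθ
  have hc0 : (0:ℝ) < c := by linarith
  have hcne : c ≠ 0 := ne_of_gt hc0
  have pyth : Real.sin (2*θ) ^ 2 + Real.cos (2*θ) ^ 2 = 1 := Real.sin_sq_add_cos_sq _
  obtain ⟨m, hm0, hmval⟩ : ∃ m : ℝ, 0 < m ∧ m = k * c₁ / (2 * c) :=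
    ⟨k * c₁ / (2 * c), by positivity, rfl⟩
  have hm2 : 2 * c * m = k * c₁ := by rw [hmval]; field_simp
  have h4 : c₁ ^ 2 * k ^ 2 = 4 * c ^ 2 * m ^ 2 := by
    linear_combination (-(2 * c * m) - k * c₁) * hm2
  have hVeq : c₁ * k ^ 2 * (2 - c₁ / c) + eT = 2 * c₁ * k ^ 2 - 4 * c * m ^ 2 + eT := by
    rw [hmval]; field_simp; ring
  have hβm : βθ = m * Real.sin (2 * θ) := by rw [hβθ, hmval]
  have hα₁' : α₁ = -(m * (1 + Real.cos (2 * θ))) := by rw [hα₁, hmval]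
  have hα₂' : α₂ = m * (1 - Real.cos (2 * θ)) := by rw [hα₂, hmval]
  -- pointwise lower bound
  have low : ∀ α β γ : ℝ, 2 * c₁ * k ^ 2 - 4 * c * m ^ 2 + eT ≤ f α β γ := by
    intro α β γ
    rw [hf]
    have h1 : β ^ 2 - α * γ ≤ |α * γ - β ^ 2| := by
      rw [abs_sub_comm]; exact le_abs_self _
    have h1c : 2 * (c * c) * (β ^ 2 - α * γ) ≤ 2 * (c * c) * |α * γ - β ^ 2| := by
      have : (0:ℝ) ≤ 2 * (c * c) := by positivity
      exact mul_le_mul_of_nonneg_left h1 this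
    have pythk : c₁ ^ 2 * k ^ 2 * Real.sin (2*θ) ^ 2 + c₁ ^ 2 * k ^ 2 * Real.cos (2*θ) ^ 2
        = c₁ ^ 2 * k ^ 2 := by linear_combination (c₁ ^ 2 * k ^ 2) * pyth
    have key : -(c₁ ^ 2 * k ^ 2) ≤
        (c * (α ^ 2 + 2 * β ^ 2 + γ ^ 2) + 2 * c * |α * γ - β ^ 2|
          + 2 * c₁ * k * Real.cos (2 * θ) * (α - γ)
          - 4 * c₁ * k * Real.sin (2 * θ) * β) * c := by
      nlinarith [sq_nonneg (c * (α - γ) + c₁ * k * Real.cos (2*θ)),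
        sq_nonneg (2 * c * β - c₁ * k * Real.sin (2*θ)), h1c, pythk]
    have key2 : -(4 * c ^ 2 * m ^ 2) ≤
        (c * (α ^ 2 + 2 * β ^ 2 + γ ^ 2) + 2 * c * |α * γ - β ^ 2|
          + 2 * c₁ * k * Real.cos (2 * θ) * (α - γ)
          - 4 * c₁ * k * Real.sin (2 * θ) * β) * c := by
      rw [← h4]; exact key
    have hdiv : -(4 * c ^ 2 * m ^ 2) / c ≤
        c * (α ^ 2 + 2 * β ^ 2 + γ ^ 2) + 2 * c * |α * γ - β ^ 2|
          + 2 * c₁ * k * Real.cos (2 * θ) * (α - γ)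
          - 4 * c₁ * k * Real.sin (2 * θ) * β :=
      (div_le_iff₀ hc0).mpr key2
    have heq : -(4 * c ^ 2 * m ^ 2) / c = -(4 * c * m ^ 2) := by
      field_simp
    rw [heq] at hdiv
    linarith
  have bdd : ∀ α β : ℝ, BddBelow (Set.range (f α β)) := fun α β =>
    ⟨2 * c₁ * k ^ 2 - 4 * c * m ^ 2 + eT, Set.forall_mem_range.mpr fun γ => low α β γ⟩
  have lowQ : ∀ α β : ℝ, c₁ * k ^ 2 * (2 - c₁ / c) + eT ≤ Q α β := by
    intro α β
    rw [hQ, hVeq]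
    exact le_ciInf (low α β)
  refine ⟨?_, lowQ⟩
  intro α hα
  obtain ⟨hα1, hα2⟩ := hα
  rw [hα₁'] at hα1
  rw [hα₂'] at hα2
  have hneg : α * (α + 2 * m * Real.cos (2*θ)) - βθ ^ 2 ≤ 0 := by
    rw [hβm]
    rw [mul_one_sub] at hα2
    rw [mul_one_add, neg_add] at hα1
    have hp1 : 0 ≤ m - m * Real.cos (2*θ) - α := by linarith only [hα2]
    have hp2 : 0 ≤ α + m * Real.cos (2*θ) + m := by linarith only [hα1]
    have pythm : m ^ 2 * Real.sin (2*θ) ^ 2 + m ^ 2 * Real.cos (2*θ) ^ 2 = m ^ 2 := by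
      linear_combination (m ^ 2) * pyth
    nlinarith [mul_nonneg hp1 hp2, pythm]
  have feq : f α βθ (α + 2 * m * Real.cos (2*θ)) = 2 * c₁ * k ^ 2 - 4 * c * m ^ 2 + eT := by
    rw [hf, abs_of_nonpos hneg, hβm]
    linear_combination 4 * m * (c * m - c₁ * k) * pyth + 4 * m * hm2
  have hle : Q α βθ ≤ c₁ * k ^ 2 * (2 - c₁ / c) + eT := by
    rw [hQ, hVeq]
    calc (⨅ γ : ℝ, f α βθ γ) ≤ f α βθ (α + 2 * m * Real.cos (2*θ)) :=
          ciInf_le (bdd α βθ) _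
      _ = 2 * c₁ * k ^ 2 - 4 * c * m ^ 2 + eT := feq
  exact le_antisymm hle (lowQ α βθ)
end

section
/- Assume k > 0. Set β_θ = (k c₁/(2c)) sin(2θ), α_{θ,1}^T = −(k c₁/(2c))(1 + cos(2θ)) and α_{θ,2}^T = (k c₁/(2c))(1 − cos(2θ)). If (α, β) ∈ ℝ² satisfies Q_T^θ(α, β) = c₁ k² (2 − c₁/c) + ē_T, then β = β_θ and α ∈ [α_{θ,1}^T, α_{θ,2}^T]; that is, the set of global minimisers of Q_T^θ is exactly the segment [α_{θ,1}^T, α_{θ,2}^T] × {β_θ}. -/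
set_option maxHeartbeats 1000000


/-- Twist-case context: `c = c₁ + c₂`, `aθ = cos 2θ`, `bθ = sin 2θ`,
`f α β γ = c(α² + 2β² + γ²) + 2c|αγ − β²| + 2c₁ k aθ (α − γ) − 4c₁ k bθ β + 2c₁k² + ē_T`
and `Q α β = ⨅ γ, f α β γ`. -/
theorem stmt5 (c₁ c₂ k θ eT : ℝ) (hc₁ : 0 < c₁) (hc₂ : 0 < c₂)
    (hθ : 0 ≤ θ ∧ θ < Real.pi) (heT : 0 ≤ eT)
    (c aθ bθ : ℝ) (hc : c = c₁ + c₂)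
    (haθ : aθ = Real.cos (2 * θ)) (hbθ : bθ = Real.sin (2 * θ))
    (f : ℝ → ℝ → ℝ → ℝ)
    (hf : ∀ α β γ : ℝ, f α β γ =
      c * (α ^ 2 + 2 * β ^ 2 + γ ^ 2) + 2 * c * |α * γ - β ^ 2|
        + 2 * c₁ * k * aθ * (α - γ) - 4 * c₁ * k * bθ * β + 2 * c₁ * k ^ 2 + eT)
    (Q : ℝ → ℝ → ℝ) (hQ : ∀ α β : ℝ, Q α β = ⨅ γ : ℝ, f α β γ)
    (hk : 0 < k) (βθ α₁ α₂ : ℝ)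
    (hβθ : βθ = (k * c₁ / (2 * c)) * Real.sin (2 * θ))
    (hα₁ : α₁ = -((k * c₁ / (2 * c)) * (1 + Real.cos (2 * θ))))
    (hα₂ : α₂ = (k * c₁ / (2 * c)) * (1 - Real.cos (2 * θ))) :
    (∀ α β : ℝ, Q α β = c₁ * k ^ 2 * (2 - c₁ / c) + eT → β = βθ ∧ α ∈ Set.Icc α₁ α₂) ∧
    {p : ℝ × ℝ | ∀ q : ℝ × ℝ, Q p.1 p.2 ≤ Q q.1 q.2} = Set.Icc α₁ α₂ ×ˢ ({βθ} : Set ℝ) := by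
  have hcpos : 0 < c := by rw [hc]; linarith
  set E₀ : ℝ := c₁ * k ^ 2 * (2 - c₁ / c) + eT with hE₀
  set T : ℝ := k * c₁ / (2 * c) with hT
  rw [← haθ] at hα₁ hα₂
  rw [← hbθ] at hβθ
  have hTpos : 0 < T := by rw [hT]; positivity
  have hT2 : 2 * c * T = k * c₁ := by rw [hT]; field_simp
  have h1 : aθ ^ 2 + bθ ^ 2 = 1 := by
    rw [haθ, hbθ]; exact Real.cos_sq_add_sin_sq _
  have hE0' : E₀ = 2 * c₁ * k ^ 2 - 4 * c * T ^ 2 + eT := by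
    rw [hE₀, hT]; field_simp; ring
  have key : ∀ α β γ : ℝ, f α β γ =
      E₀ + 2 * c * (|α * γ - β ^ 2| + (α * γ - β ^ 2))
        + c * (γ - α - 2 * T * aθ) ^ 2 + 4 * c * (β - βθ) ^ 2 := by
    intro α β γ
    rw [hf, hE0', hβθ]
    linear_combination (-2 * aθ * (α - γ) + 4 * bθ * β) * hT2 + (-4 * c * T ^ 2) * h1
  have hfact : ∀ α : ℝ, α * (α + 2 * T * aθ) - βθ ^ 2 = (α - α₁) * (α - α₂) := by
    intro α
    rw [hβθ, hα₁, hα₂]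
    linear_combination (-T ^ 2) * h1
  have hα₁₂ : α₁ < α₂ := by rw [hα₁, hα₂]; linarith [hTpos]
  have hblow : ∀ α β γ : ℝ, E₀ + 4 * c * (β - βθ) ^ 2 ≤ f α β γ := by
    intro α β γ
    have p1 : 0 ≤ c * (|α * γ - β ^ 2| + (α * γ - β ^ 2)) :=
      mul_nonneg hcpos.le (by linarith [neg_abs_le (α * γ - β ^ 2)])
    have p2 : 0 ≤ c * (γ - α - 2 * T * aθ) ^ 2 := by positivity
    rw [key]
    linarith [p1, p2]
  have hb1 : ∀ α β : ℝ, BddBelow (Set.range (f α β)) := by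
    intro α β
    refine ⟨E₀, ?_⟩
    rintro y ⟨γ, rfl⟩
    have p : 0 ≤ 4 * c * (β - βθ) ^ 2 := by positivity
    linarith [hblow α β γ, p]
  have hlow : ∀ α β : ℝ, E₀ + 4 * c * (β - βθ) ^ 2 ≤ Q α β := by
    intro α β
    rw [hQ]
    exact le_ciInf (hblow α β)
  have hlow' : ∀ α β : ℝ, E₀ ≤ Q α β := by
    intro α β
    refine le_trans (le_add_of_nonneg_right (by positivity)) (hlow α β)
  have hQle : ∀ α β γ : ℝ, Q α β ≤ f α β γ := by
    intro α β γ
    rw [hQ]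
    exact ciInf_le (hb1 α β) γ
  have hseg : ∀ α : ℝ, α₁ ≤ α → α ≤ α₂ → Q α βθ = E₀ := by
    intro α h3 h4
    refine le_antisymm ?_ (hlow' α βθ)
    refine le_trans (hQle α βθ (α + 2 * T * aθ)) ?_
    rw [key]
    have hx : α * (α + 2 * T * aθ) - βθ ^ 2 ≤ 0 := by
      rw [hfact]
      exact mul_nonpos_iff.mpr (Or.inl ⟨by linarith, by linarith⟩)
    rw [abs_of_nonpos hx]
    apply le_of_eq
    ring
  have hmain : ∀ α β : ℝ, Q α β = E₀ → β = βθ ∧ α₁ ≤ α ∧ α ≤ α₂ := by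
    intro α β hQE
    have hβ : β = βθ := by
      have h := hlow α β
      rw [hQE] at h
      have h2 : 4 * c * (β - βθ) ^ 2 ≤ 4 * c * 0 := by linarith
      have h3 : (β - βθ) ^ 2 ≤ 0 := le_of_mul_le_mul_left h2 (by linarith)
      have h4 : (β - βθ) ^ 2 = 0 := le_antisymm h3 (sq_nonneg _)
      exact sub_eq_zero.mp (sq_eq_zero_iff.mp h4)
    rw [hβ] at hQE
    refine ⟨hβ, ?_⟩
    have hx0 : (α - α₁) * (α - α₂) ≤ 0 := by
      by_contra hcon
      push_neg at hcon
      obtain ⟨x₀, hx₀⟩ : ∃ x₀ : ℝ, x₀ = (α - α₁) * (α - α₂) := ⟨_, rfl⟩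
      rw [← hx₀] at hcon
      have hα0 : α ≠ 0 := by
        intro h0
        have h5 := hfact 0
        have h6 : (0 - α₁) * (0 - α₂) ≤ 0 := by
          rw [← h5]; linarith [sq_nonneg βθ]
        rw [hx₀, h0] at hcon
        linarith
      have ha2 : (0:ℝ) < α ^ 2 :=
        lt_of_le_of_ne (sq_nonneg α) (Ne.symm (pow_ne_zero 2 hα0))
      obtain ⟨δ, hδ⟩ : ∃ δ : ℝ, δ = min (2 * c * x₀) (c * x₀ ^ 2 / (4 * α ^ 2)) := ⟨_, rfl⟩
      have hδpos : 0 < δ := by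
        rw [hδ]
        exact lt_min (by positivity) (div_pos (mul_pos hcpos (pow_pos hcon 2)) (by positivity))
      have hptwise : ∀ γ : ℝ, E₀ + δ ≤ f α βθ γ := by
        intro γ
        rw [key]
        obtain ⟨x, hx⟩ : ∃ x : ℝ, x = α * γ - βθ ^ 2 := ⟨_, rfl⟩
        obtain ⟨u, hu⟩ : ∃ u : ℝ, u = γ - α - 2 * T * aθ := ⟨_, rfl⟩
        rw [← hx, ← hu]
        have hux : α * u = x - x₀ := by
          rw [hu, hx, hx₀, ← hfact α]; ring
        have hcu : (0:ℝ) ≤ c * u ^ 2 := by positivity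
        rcases le_or_gt (x₀ / 2) x with hcase | hcase
        · have h7 : δ ≤ 2 * c * x₀ := hδ ▸ min_le_left _ _
          have h8 : 2 * c * x ≤ 2 * c * |x| :=
            mul_le_mul_of_nonneg_left (le_abs_self x) (by linarith)
          have h9 : 4 * c * (x₀ / 2) ≤ 4 * c * x :=
            mul_le_mul_of_nonneg_left hcase (by linarith)
          linarith [h7, h8, h9, hcu]
        · have h7 : δ ≤ c * x₀ ^ 2 / (4 * α ^ 2) := hδ ▸ min_le_right _ _
          have h9 : 2 * α * u + x₀ ≤ 0 := by linarith [hux]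
          have hp1 : 0 ≤ c * (2 * α * u + x₀) ^ 2 := by positivity
          have hp2 : 0 ≤ c * x₀ * (-(2 * α * u + x₀)) :=
            mul_nonneg (mul_nonneg hcpos.le hcon.le) (by linarith)
          have h6 : c * x₀ ^ 2 / (4 * α ^ 2) ≤ c * u ^ 2 := by
            rw [div_le_iff₀ (by positivity)]
            linarith [hp1, hp2]
          have h8 : 0 ≤ 2 * c * (|x| + x) :=
            mul_nonneg (by linarith) (by linarith [neg_abs_le x])
          linarith [h7, h6, h8]
      have hge : E₀ + δ ≤ Q α βθ := by
        rw [hQ]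
        exact le_ciInf hptwise
      rw [hQE] at hge
      linarith
    constructor
    · by_contra h
      push_neg at h
      have := mul_pos_of_neg_of_neg (show α - α₁ < 0 by linarith) (show α - α₂ < 0 by linarith)
      linarith
    · by_contra h
      push_neg at h
      have := mul_pos (show 0 < α - α₁ by linarith) (show 0 < α - α₂ by linarith)
      linarith
  constructor
  · intro α β h
    obtain ⟨hb, h3, h4⟩ := hmain α β h
    exact ⟨hb, Set.mem_Icc.mpr ⟨h3, h4⟩⟩
  · ext ⟨a, b⟩
    simp only [Set.mem_setOf_eq, Set.mem_prod, Set.mem_Icc, Set.mem_singleton_iff]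
    constructor
    · intro h
      have h1' : Q a b ≤ E₀ := by
        calc Q a b ≤ Q α₁ βθ := h (α₁, βθ)
          _ = E₀ := hseg α₁ le_rfl hα₁₂.le
      obtain ⟨hb, h3, h4⟩ := hmain a b (le_antisymm h1' (hlow' a b))
      exact ⟨⟨h3, h4⟩, hb⟩
    · rintro ⟨⟨h3, h4⟩, rfl⟩
      intro q
      rw [hseg a h3 h4]
      exact hlow' q.1 q.2
end

section
/- In the case k = 0, Q_T^θ(α, β) = ē_T + 4 c β² whenever α² ≤ β², and Q_T^θ(α, β) = ē_T + c (α² + β²)²/α² whenever α² > β² (in particular Q_T^θ no longer depends on θ and, up to the additive constant ē_T and the factor c, coincides with the Sadowsky density Q̄(α, β) = 4β² if α² ≤ β² and (α² + β²)²/α² if α² > β²); moreover (0, 0) is the unique global minimiser of Q_T^θ and Q_T^θ(0, 0) = ē_T. -/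
/-!
For `k = 0` the energy is `ē_T + c (|M|² + 2|det M|)`, so everything reduces to minimising
`|M|² + 2|det M|` over `γ`. Writing `t = αγ - β²`, one has
`|M|² + 2|det M| ≥ |M|² - 2t = (α - γ)² + 4β²`, with equality at `γ = α`, admissible when
`α² ≤ β²`; and `α² (|M|² + 2|t|) - (α² + β²)² = t² + 2tβ² + 2α²|t| ≥ t² + 2|t| (α² - β²)`,
which is nonnegative when `β² < α²`, with equality at `t = 0`, i.e. `γ = β² / α`.
-/

open Set

/-- `|M|² + 2|det M|` for the symmetric matrix `M = [[α, β], [β, γ]]`. -/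
def sadowskyIntegrand (α β γ : ℝ) : ℝ :=
  α ^ 2 + 2 * β ^ 2 + γ ^ 2 + 2 * |α * γ - β ^ 2|

noncomputable def sadowskyDensity (α β : ℝ) : ℝ :=
  if α ^ 2 ≤ β ^ 2 then 4 * β ^ 2 else (α ^ 2 + β ^ 2) ^ 2 / α ^ 2

section

variable {α β : ℝ}

theorem four_mul_sq_le_sadowskyIntegrand (γ : ℝ) : 4 * β ^ 2 ≤ sadowskyIntegrand α β γ := by
  unfold sadowskyIntegrand
  nlinarith [neg_abs_le (α * γ - β ^ 2), sq_nonneg (γ - α)]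

theorem sadowskyIntegrand_self (h : α ^ 2 ≤ β ^ 2) : sadowskyIntegrand α β α = 4 * β ^ 2 := by
  rw [sadowskyIntegrand, abs_of_nonpos (by nlinarith)]
  ring

theorem sq_add_sq_sq_div_le_sadowskyIntegrand (h : β ^ 2 < α ^ 2) (γ : ℝ) :
    (α ^ 2 + β ^ 2) ^ 2 / α ^ 2 ≤ sadowskyIntegrand α β γ := by
  have hα : 0 < α ^ 2 := (sq_nonneg β).trans_lt h
  rw [div_le_iff₀ hα, sadowskyIntegrand]
  rcases abs_cases (α * γ - β ^ 2) with ⟨habs, ht⟩ | ⟨habs, ht⟩ <;> rw [habs]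
  · nlinarith [mul_nonneg ht (add_nonneg (sq_nonneg α) (sq_nonneg β)),
      sq_nonneg (α * γ - β ^ 2)]
  · nlinarith [mul_nonneg (neg_nonneg.2 ht.le) (sub_nonneg.2 h.le), sq_nonneg (α * γ - β ^ 2)]

theorem sadowskyIntegrand_sq_div (hα : α ≠ 0) :
    sadowskyIntegrand α β (β ^ 2 / α) = (α ^ 2 + β ^ 2) ^ 2 / α ^ 2 := by
  rw [sadowskyIntegrand, mul_div_cancel₀ _ hα, sub_self, abs_zero]
  field_simp
  ring

theorem isLeast_sadowskyIntegrand (α β : ℝ) :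
    IsLeast (range (sadowskyIntegrand α β)) (sadowskyDensity α β) := by
  unfold sadowskyDensity
  split_ifs with h
  · exact ⟨⟨α, sadowskyIntegrand_self h⟩, forall_mem_range.2 four_mul_sq_le_sadowskyIntegrand⟩
  · have hlt : β ^ 2 < α ^ 2 := not_le.1 h
    have hα : α ≠ 0 := by rintro rfl; linarith [sq_nonneg β]
    exact ⟨⟨β ^ 2 / α, sadowskyIntegrand_sq_div hα⟩,
      forall_mem_range.2 (sq_add_sq_sq_div_le_sadowskyIntegrand hlt)⟩

theorem sadowskyDensity_nonneg (α β : ℝ) : 0 ≤ sadowskyDensity α β := by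
  unfold sadowskyDensity
  split_ifs <;> positivity

theorem sadowskyDensity_eq_zero_iff : sadowskyDensity α β = 0 ↔ α = 0 ∧ β = 0 := by
  constructor
  · intro h0
    unfold sadowskyDensity at h0
    split_ifs at h0 with h
    · have hβ : β = 0 := by simpa using h0
      subst hβ
      exact ⟨by simpa using h, rfl⟩
    · have hα : 0 < α ^ 2 := (sq_nonneg β).trans_lt (not_le.1 h)
      exact absurd h0 (div_pos (pow_pos (add_pos_of_pos_of_nonneg hα (sq_nonneg β)) 2) hα).ne'
  · rintro ⟨rfl, rfl⟩
    simp [sadowskyDensity]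

end

theorem stmt6_general (c₁ c₂ k eT : ℝ) (hc₁ : 0 < c₁) (hc₂ : 0 < c₂)
    (c aθ bθ : ℝ) (hc : c = c₁ + c₂)
    (f : ℝ → ℝ → ℝ → ℝ)
    (hf : ∀ α β γ : ℝ, f α β γ =
      c * (α ^ 2 + 2 * β ^ 2 + γ ^ 2) + 2 * c * |α * γ - β ^ 2|
        + 2 * c₁ * k * aθ * (α - γ) - 4 * c₁ * k * bθ * β + 2 * c₁ * k ^ 2 + eT)
    (Q : ℝ → ℝ → ℝ) (hQ : ∀ α β : ℝ, Q α β = ⨅ γ : ℝ, f α β γ)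
    (hk : k = 0) :
    (∀ α β : ℝ, α ^ 2 ≤ β ^ 2 → Q α β = eT + 4 * c * β ^ 2) ∧
    (∀ α β : ℝ, β ^ 2 < α ^ 2 → Q α β = eT + c * (α ^ 2 + β ^ 2) ^ 2 / α ^ 2) ∧
    Q 0 0 = eT ∧
    (∀ α β : ℝ, eT ≤ Q α β ∧ (Q α β = eT → α = 0 ∧ β = 0)) := by
  subst hk
  have hc0 : 0 < c := hc ▸ add_pos hc₁ hc₂
  have hQ_eq (α β : ℝ) : Q α β = eT + c * sadowskyDensity α β := by
    have hf_eq : (f α β ·) = (eT + c * ·) ∘ sadowskyIntegrand α β := by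
      ext γ; simp only [hf, Function.comp, sadowskyIntegrand]; ring
    rw [hQ, iInf, hf_eq, range_comp]
    exact ((monotone_id.const_mul hc0.le).const_add eT |>.map_isLeast
      (isLeast_sadowskyIntegrand α β)).csInf_eq
  have hsmall (α β : ℝ) (h : α ^ 2 ≤ β ^ 2) : Q α β = eT + 4 * c * β ^ 2 := by
    rw [hQ_eq, sadowskyDensity, if_pos h]; ring
  refine ⟨hsmall, fun α β h ↦ ?_, by simpa using hsmall 0 0 le_rfl, fun α β ↦ ⟨?_, fun h ↦ ?_⟩⟩
  · rw [hQ_eq, sadowskyDensity, if_neg h.not_ge, mul_div_assoc]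
  · rw [hQ_eq]
    nlinarith [sadowskyDensity_nonneg α β]
  · rw [hQ_eq, add_eq_left, mul_eq_zero, or_iff_right hc0.ne'] at h
    exact sadowskyDensity_eq_zero_iff.1 h

/-- Twist-case context: `c = c₁ + c₂`, `aθ = cos 2θ`, `bθ = sin 2θ`,
`f α β γ = c(α² + 2β² + γ²) + 2c|αγ − β²| + 2c₁ k aθ (α − γ) − 4c₁ k bθ β + 2c₁k² + ē_T`
and `Q α β = ⨅ γ, f α β γ`. -/
theorem stmt6 (c₁ c₂ k θ eT : ℝ) (hc₁ : 0 < c₁) (hc₂ : 0 < c₂)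
    (hθ : 0 ≤ θ ∧ θ < Real.pi) (heT : 0 ≤ eT)
    (c aθ bθ : ℝ) (hc : c = c₁ + c₂)
    (haθ : aθ = Real.cos (2 * θ)) (hbθ : bθ = Real.sin (2 * θ))
    (f : ℝ → ℝ → ℝ → ℝ)
    (hf : ∀ α β γ : ℝ, f α β γ =
      c * (α ^ 2 + 2 * β ^ 2 + γ ^ 2) + 2 * c * |α * γ - β ^ 2|
        + 2 * c₁ * k * aθ * (α - γ) - 4 * c₁ * k * bθ * β + 2 * c₁ * k ^ 2 + eT)
    (Q : ℝ → ℝ → ℝ) (hQ : ∀ α β : ℝ, Q α β = ⨅ γ : ℝ, f α β γ)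
    (hk : k = 0) :
    (∀ α β : ℝ, α ^ 2 ≤ β ^ 2 → Q α β = eT + 4 * c * β ^ 2) ∧
    (∀ α β : ℝ, β ^ 2 < α ^ 2 → Q α β = eT + c * (α ^ 2 + β ^ 2) ^ 2 / α ^ 2) ∧
    Q 0 0 = eT ∧
    (∀ α β : ℝ, eT ≤ Q α β ∧ (Q α β = eT → α = 0 ∧ β = 0)) :=
  stmt6_general c₁ c₂ k eT hc₁ hc₂ c aθ bθ hc f hf Q hQ hk
end

section
/- Let α ≠ 0 and suppose β² − α² ≤ (c₁/c) k a_θ α ≤ α² + β². Then for every γ < β²/α one has f_{α,β}'(γ) < 0 and for every γ > β²/α one has f_{α,β}'(γ) > 0 (the derivative taken at points γ ≠ β²/α, where f_{α,β} is differentiable with f_{α,β}'(γ)/2 = cγ + cα·sgn(αγ − β²) − c₁ k a_θ); consequently the minimum of f_{α,β} over ℝ is attained exactly at γ = β²/α. -/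
/-!
Put `γ₀ = β² / α` and `K = c₁ k a_θ`. Up to an additive constant, `f_{α,β}` is the kinked
quadratic `c γ² + 2c|αγ - β²| - 2Kγ`, and since `αγ - β² = α (γ - γ₀)` its one-sided slopes at
`γ₀` are `2 (c γ₀ - K ∓ c|α|)`. The hypotheses on `α, β` say exactly that `|c γ₀ - K| ≤ c|α|`,
i.e. that the left slope is `≤ 0` and the right slope `≥ 0`. Writing `t = γ - γ₀`, the excess
`f(γ) - f(γ₀) - c t² = 2t (c γ₀ - K) + 2c|α||t|` is then nonnegative, so `γ₀` is the strict
minimiser; away from `γ₀` the derivative is `2c t + 2 (c γ₀ - K ± c|α|)`, where the sign `±`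
is that of `t`, so it has the sign of `t`.
-/

lemma Real.sign_eq_coe_sign (r : ℝ) : Real.sign r = (SignType.sign r : ℝ) := by
  rcases lt_trichotomy r 0 with h | rfl | h
  · simp [Real.sign_of_neg h, h]
  · simp [Real.sign_zero]
  · simp [Real.sign_of_pos h, h]

lemma mul_sign_mul_sub {α : ℝ} (hα : α ≠ 0) (b γ : ℝ) :
    α * Real.sign (α * γ - b) = |α| * Real.sign (γ - b / α) := by
  have hfactor : α * γ - b = α * (γ - b / α) := by field_simp
  rw [hfactor, Real.sign_eq_coe_sign, Real.sign_eq_coe_sign, sign_mul, SignType.coe_mul,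
    ← mul_assoc, self_mul_sign]

lemma abs_mul_div_sub_le {c K α b : ℝ} (hc : 0 < c) (hα : α ≠ 0)
    (h₁ : b - α ^ 2 ≤ K / c * α) (h₂ : K / c * α ≤ α ^ 2 + b) :
    |c * (b / α) - K| ≤ c * |α| := by
  have hscale : c * (K / c * α) = K * α := by field_simp
  have hmul : |c * b - K * α| ≤ c * α ^ 2 := by
    rw [abs_le]
    constructor <;> nlinarith
  have hdiv : c * (b / α) - K = (c * b - K * α) / α := by field_simp
  rw [hdiv, abs_div, div_le_iff₀ (abs_pos.2 hα), mul_assoc, abs_mul_abs_self, ← sq]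
  exact hmul

section KinkedQuadratic

variable {c K α b : ℝ}

def kinkedQuadratic (c K α b x : ℝ) : ℝ := c * x ^ 2 + 2 * c * |α * x - b| - 2 * K * x

lemma hasDerivAt_kinkedQuadratic {γ : ℝ} (h : α * γ - b ≠ 0) :
    HasDerivAt (kinkedQuadratic c K α b)
      (2 * (c * γ + c * α * Real.sign (α * γ - b) - K)) γ := by
  have hlin : HasDerivAt (fun x => α * x - b) α γ := by
    simpa using ((hasDerivAt_id γ).const_mul α).sub_const b
  have habs : HasDerivAt (fun x => |α * x - b|) (SignType.sign (α * γ - b) * α) γ := by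
    exact (hasDerivAt_abs h).comp γ hlin
  have hsq : HasDerivAt (fun x : ℝ => x ^ 2) (2 * γ) γ := by simpa using hasDerivAt_pow 2 γ
  refine (((hsq.const_mul c).add (habs.const_mul (2 * c))).sub
    ((hasDerivAt_id γ).const_mul (2 * K))).congr_deriv ?_
  rw [Real.sign_eq_coe_sign]
  ring

variable (hreg : |c * (b / α) - K| ≤ c * |α|)
include hreg

lemma kinkedQuadratic_slope_neg (hc : 0 < c) (hα : α ≠ 0) {γ : ℝ} (hγ : γ < b / α) :
    c * γ + c * α * Real.sign (α * γ - b) - K < 0 := by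
  rw [mul_assoc, mul_sign_mul_sub hα, Real.sign_of_neg (sub_neg.2 hγ)]
  have hdist : c * (γ - b / α) < 0 := mul_neg_of_pos_of_neg hc (sub_neg.2 hγ)
  linarith [(abs_le.1 hreg).2]

lemma kinkedQuadratic_slope_pos (hc : 0 < c) (hα : α ≠ 0) {γ : ℝ} (hγ : b / α < γ) :
    0 < c * γ + c * α * Real.sign (α * γ - b) - K := by
  rw [mul_assoc, mul_sign_mul_sub hα, Real.sign_of_pos (sub_pos.2 hγ)]
  have hdist : 0 < c * (γ - b / α) := mul_pos hc (sub_pos.2 hγ)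
  linarith [(abs_le.1 hreg).1]

lemma kinkedQuadratic_div_add_sq_le (hα : α ≠ 0) (γ : ℝ) :
    kinkedQuadratic c K α b (b / α) + c * (γ - b / α) ^ 2 ≤ kinkedQuadratic c K α b γ := by
  set t := γ - b / α
  have hkink : α * (b / α) - b = 0 := by field_simp; ring
  have hfactor : α * γ - b = α * t := by simp only [t]; field_simp
  have hcross : -(|t| * (c * |α|)) ≤ t * (c * (b / α) - K) :=
    calc -(|t| * (c * |α|)) ≤ -(|t| * |c * (b / α) - K|) :=
          neg_le_neg (mul_le_mul_of_nonneg_left hreg (abs_nonneg t))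
      _ ≤ t * (c * (b / α) - K) := by rw [← abs_mul]; exact neg_abs_le _
  have hexcess : kinkedQuadratic c K α b γ - kinkedQuadratic c K α b (b / α) - c * t ^ 2
      = 2 * (t * (c * (b / α) - K)) + 2 * (|t| * (c * |α|)) := by
    have hγ : γ = t + b / α := by simp only [t]; ring
    simp only [kinkedQuadratic]
    rw [hkink, hfactor, abs_zero, abs_mul, hγ]
    ring
  linarith

lemma kinkedQuadratic_div_lt (hc : 0 < c) (hα : α ≠ 0) {γ : ℝ} (hγ : γ ≠ b / α) :
    kinkedQuadratic c K α b (b / α) < kinkedQuadratic c K α b γ := by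
  have hgap : 0 < c * (γ - b / α) ^ 2 := mul_pos hc (sq_pos_of_ne_zero (sub_ne_zero.2 hγ))
  linarith [kinkedQuadratic_div_add_sq_le hreg hα γ]

end KinkedQuadratic

theorem stmt7_general (c₁ c₂ k eT : ℝ) (hc₁ : 0 < c₁) (hc₂ : 0 < c₂)
    (c aθ bθ : ℝ) (hc : c = c₁ + c₂)
    (f : ℝ → ℝ → ℝ → ℝ)
    (hf : ∀ α β γ : ℝ, f α β γ =
      c * (α ^ 2 + 2 * β ^ 2 + γ ^ 2) + 2 * c * |α * γ - β ^ 2|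
        + 2 * c₁ * k * aθ * (α - γ) - 4 * c₁ * k * bθ * β + 2 * c₁ * k ^ 2 + eT)
    (α β : ℝ) (hα : α ≠ 0)
    (hreg₁ : β ^ 2 - α ^ 2 ≤ (c₁ / c) * k * aθ * α)
    (hreg₂ : (c₁ / c) * k * aθ * α ≤ α ^ 2 + β ^ 2) :
    (∀ γ : ℝ, γ ≠ β ^ 2 / α →
      HasDerivAt (f α β) (2 * (c * γ + c * α * Real.sign (α * γ - β ^ 2) - c₁ * k * aθ)) γ) ∧
    (∀ γ : ℝ, γ < β ^ 2 / α →
      2 * (c * γ + c * α * Real.sign (α * γ - β ^ 2) - c₁ * k * aθ) < 0) ∧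
    (∀ γ : ℝ, β ^ 2 / α < γ →
      0 < 2 * (c * γ + c * α * Real.sign (α * γ - β ^ 2) - c₁ * k * aθ)) ∧
    (∀ γ : ℝ, f α β (β ^ 2 / α) ≤ f α β γ) ∧
    (∀ γ : ℝ, f α β γ = f α β (β ^ 2 / α) → γ = β ^ 2 / α) := by
  have hc0 : 0 < c := by linarith
  have hreg : |c * (β ^ 2 / α) - c₁ * k * aθ| ≤ c * |α| :=
    abs_mul_div_sub_le hc0 hα (by convert hreg₁ using 1; ring) (by convert hreg₂ using 1; ring)
  have hfq : f α β = fun γ => kinkedQuadratic c (c₁ * k * aθ) α (β ^ 2) γ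
      + (c * (α ^ 2 + 2 * β ^ 2) + 2 * c₁ * k * aθ * α - 4 * c₁ * k * bθ * β
        + 2 * c₁ * k ^ 2 + eT) := by
    funext γ
    rw [hf, kinkedQuadratic]
    ring
  have hmin : ∀ γ, γ ≠ β ^ 2 / α → f α β (β ^ 2 / α) < f α β γ := fun γ hγ => by
    simpa only [hfq, add_lt_add_iff_right] using kinkedQuadratic_div_lt hreg hc0 hα hγ
  refine ⟨fun γ hγ => ?_, fun γ hγ => ?_, fun γ hγ => ?_, fun γ => ?_, fun γ hγ => ?_⟩
  · have hne : α * γ - β ^ 2 ≠ 0 := fun h => hγ (by field_simp; linarith)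
    rw [hfq]
    exact (hasDerivAt_kinkedQuadratic hne).add_const _
  · linarith [kinkedQuadratic_slope_neg hreg hc0 hα hγ]
  · linarith [kinkedQuadratic_slope_pos hreg hc0 hα hγ]
  · rcases eq_or_ne γ (β ^ 2 / α) with rfl | hγ
    · exact le_rfl
    · exact (hmin γ hγ).le
  · by_contra hne
    exact (hmin γ hne).ne' hγ

/-- Twist-case context: `c = c₁ + c₂`, `aθ = cos 2θ`, `bθ = sin 2θ`,
`f α β γ = c(α² + 2β² + γ²) + 2c|αγ − β²| + 2c₁ k aθ (α − γ) − 4c₁ k bθ β + 2c₁k² + ē_T`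
and `Q α β = ⨅ γ, f α β γ`. -/
theorem stmt7 (c₁ c₂ k θ eT : ℝ) (hc₁ : 0 < c₁) (hc₂ : 0 < c₂)
    (hθ : 0 ≤ θ ∧ θ < Real.pi) (heT : 0 ≤ eT)
    (c aθ bθ : ℝ) (hc : c = c₁ + c₂)
    (haθ : aθ = Real.cos (2 * θ)) (hbθ : bθ = Real.sin (2 * θ))
    (f : ℝ → ℝ → ℝ → ℝ)
    (hf : ∀ α β γ : ℝ, f α β γ =
      c * (α ^ 2 + 2 * β ^ 2 + γ ^ 2) + 2 * c * |α * γ - β ^ 2|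
        + 2 * c₁ * k * aθ * (α - γ) - 4 * c₁ * k * bθ * β + 2 * c₁ * k ^ 2 + eT)
    (Q : ℝ → ℝ → ℝ) (hQ : ∀ α β : ℝ, Q α β = ⨅ γ : ℝ, f α β γ)
    (α β : ℝ) (hα : α ≠ 0)
    (hreg₁ : β ^ 2 - α ^ 2 ≤ (c₁ / c) * k * aθ * α)
    (hreg₂ : (c₁ / c) * k * aθ * α ≤ α ^ 2 + β ^ 2) :
    (∀ γ : ℝ, γ ≠ β ^ 2 / α →
      HasDerivAt (f α β) (2 * (c * γ + c * α * Real.sign (α * γ - β ^ 2) - c₁ * k * aθ)) γ) ∧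
    (∀ γ : ℝ, γ < β ^ 2 / α →
      2 * (c * γ + c * α * Real.sign (α * γ - β ^ 2) - c₁ * k * aθ) < 0) ∧
    (∀ γ : ℝ, β ^ 2 / α < γ →
      0 < 2 * (c * γ + c * α * Real.sign (α * γ - β ^ 2) - c₁ * k * aθ)) ∧
    (∀ γ : ℝ, f α β (β ^ 2 / α) ≤ f α β γ) ∧
    (∀ γ : ℝ, f α β γ = f α β (β ^ 2 / α) → γ = β ^ 2 / α) :=
  stmt7_general c₁ c₂ k eT hc₁ hc₂ c aθ bθ hc f hf α β hα hreg₁ hreg₂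
end

section
/- If (α, β) ∈ ℝ² satisfies (k/(2c)) d_θ α > α² + β² (the region 𝒟_S), then Q_S^θ(α, β) = 2 c₁ k (a_θ α − b_θ β) + c k² (1 − d_θ²/(4c²)) + ē_S, and the infimum defining Q_S^θ(α, β) is attained at γ = (k/(2c)) d_θ − α. -/
/-! Writing `M = !![α, β; β, γ]`, the identity `|M|² + 2 det M = (tr M)²` together with
`det M ≤ |det M|` bounds the energy below by the quadratic `c s² − k dθ s` in the trace
`s = α + γ`, whose minimum `−(k dθ)²/(4c)` is attained at `s = k dθ/(2c)`. On the region
`𝒟_S` the matrix with this trace has `det M > 0`, so there the bound is sharp. -/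

section Energy

variable {c : ℝ}

lemma neg_sq_div_le_mul_sq_sub (hc : 0 < c) (b s : ℝ) : -(b ^ 2 / (4 * c)) ≤ c * s ^ 2 - b * s := by
  have hsq : c * s ^ 2 - b * s + b ^ 2 / (4 * c) = c * (s - b / (2 * c)) ^ 2 := by
    field_simp
    ring
  nlinarith [mul_nonneg hc.le (sq_nonneg (s - b / (2 * c)))]

lemma mul_sq_sub_at_vertex (hc : c ≠ 0) (b : ℝ) :
    c * (b / (2 * c)) ^ 2 - b * (b / (2 * c)) = -(b ^ 2 / (4 * c)) := by
  field_simp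
  ring

lemma mul_sq_trace_le (hc : 0 ≤ c) (α β γ : ℝ) :
    c * (α + γ) ^ 2 ≤ c * (α ^ 2 + 2 * β ^ 2 + γ ^ 2) + 2 * c * |α * γ - β ^ 2| := by
  nlinarith [mul_le_mul_of_nonneg_left (le_abs_self (α * γ - β ^ 2)) hc]

lemma mul_sq_trace_eq {α β γ : ℝ} (h : β ^ 2 ≤ α * γ) :
    c * (α ^ 2 + 2 * β ^ 2 + γ ^ 2) + 2 * c * |α * γ - β ^ 2| = c * (α + γ) ^ 2 := by
  rw [abs_of_nonneg (sub_nonneg.mpr h)]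
  ring

lemma neg_sq_div_le_energy (hc : 0 < c) (b α β γ : ℝ) :
    -(b ^ 2 / (4 * c)) ≤
      c * (α ^ 2 + 2 * β ^ 2 + γ ^ 2) + 2 * c * |α * γ - β ^ 2| - b * (α + γ) := by
  linarith [mul_sq_trace_le hc.le α β γ, neg_sq_div_le_mul_sq_sub hc b (α + γ)]

lemma energy_at_vertex (hc : 0 < c) {b α β : ℝ} (hreg : α ^ 2 + β ^ 2 < b / (2 * c) * α) :
    c * (α ^ 2 + 2 * β ^ 2 + (b / (2 * c) - α) ^ 2) + 2 * c * |α * (b / (2 * c) - α) - β ^ 2|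
      - b * (α + (b / (2 * c) - α)) = -(b ^ 2 / (4 * c)) := by
  have hdet : β ^ 2 ≤ α * (b / (2 * c) - α) := by linarith [mul_sub α (b / (2 * c)) α]
  rw [mul_sq_trace_eq hdet, add_sub_cancel, mul_sq_sub_at_vertex hc.ne']

end Energy

theorem stmt9_general (c₁ c₂ k eS : ℝ) (hc₁ : 0 < c₁) (hc₂ : 0 < c₂)
    (c aθ bθ dθ : ℝ) (hc : c = c₁ + c₂)
    (fS : ℝ → ℝ → ℝ → ℝ)
    (hfS : ∀ α β γ : ℝ, fS α β γ =
      c * (α ^ 2 + 2 * β ^ 2 + γ ^ 2) + 2 * c * |α * γ - β ^ 2|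
        - k * dθ * (α + γ) + 2 * c₁ * k * (aθ * α - bθ * β) + c * k ^ 2 + eS)
    (Q : ℝ → ℝ → ℝ) (hQ : ∀ α β : ℝ, Q α β = ⨅ γ : ℝ, fS α β γ)
    (α β : ℝ) (hreg : (k / (2 * c)) * dθ * α > α ^ 2 + β ^ 2) :
    Q α β = 2 * c₁ * k * (aθ * α - bθ * β) + c * k ^ 2 * (1 - dθ ^ 2 / (4 * c ^ 2)) + eS ∧
    fS α β ((k / (2 * c)) * dθ - α) = Q α β := by
  have hcpos : 0 < c := hc ▸ add_pos hc₁ hc₂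
  set V := -((k * dθ) ^ 2 / (4 * c)) + 2 * c₁ * k * (aθ * α - bθ * β) + c * k ^ 2 + eS with hV
  have hV' : 2 * c₁ * k * (aθ * α - bθ * β) + c * k ^ 2 * (1 - dθ ^ 2 / (4 * c ^ 2)) + eS = V := by
    rw [hV]
    field_simp
    ring
  have hlow : ∀ γ, V ≤ fS α β γ := fun γ => by
    rw [hfS, hV]
    linarith [neg_sq_div_le_energy hcpos (k * dθ) α β γ]
  have hval : fS α β (k / (2 * c) * dθ - α) = V := by
    rw [hfS, show k / (2 * c) * dθ - α = k * dθ / (2 * c) - α by ring,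
      energy_at_vertex hcpos (hreg.trans_eq (by ring))]
  have hQV : Q α β = V :=
    (hQ α β).trans (IsLeast.csInf_eq ⟨⟨_, hval⟩, by rintro _ ⟨γ, rfl⟩; exact hlow γ⟩)
  exact ⟨hQV.trans hV'.symm, hval.trans hQV.symm⟩

/-- Splay-bend-case context: `c = c₁ + c₂`, `aθ = cos 2θ`, `bθ = sin 2θ`,
`dθ = c₁ aθ − c − c₂`,
`fS α β γ = c(α² + 2β² + γ²) + 2c|αγ − β²| − k dθ (α + γ) + 2c₁ k (aθ α − bθ β) + c k² + ē_S`
and `Q α β = ⨅ γ, fS α β γ`. -/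
theorem stmt9 (c₁ c₂ k θ eS : ℝ) (hc₁ : 0 < c₁) (hc₂ : 0 < c₂)
    (hθ : 0 ≤ θ ∧ θ < Real.pi) (heS : 0 ≤ eS)
    (c aθ bθ dθ : ℝ) (hc : c = c₁ + c₂)
    (haθ : aθ = Real.cos (2 * θ)) (hbθ : bθ = Real.sin (2 * θ))
    (hdθ : dθ = c₁ * aθ - c - c₂)
    (fS : ℝ → ℝ → ℝ → ℝ)
    (hfS : ∀ α β γ : ℝ, fS α β γ =
      c * (α ^ 2 + 2 * β ^ 2 + γ ^ 2) + 2 * c * |α * γ - β ^ 2|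
        - k * dθ * (α + γ) + 2 * c₁ * k * (aθ * α - bθ * β) + c * k ^ 2 + eS)
    (Q : ℝ → ℝ → ℝ) (hQ : ∀ α β : ℝ, Q α β = ⨅ γ : ℝ, fS α β γ)
    (α β : ℝ) (hreg : (k / (2 * c)) * dθ * α > α ^ 2 + β ^ 2) :
    Q α β = 2 * c₁ * k * (aθ * α - bθ * β) + c * k ^ 2 * (1 - dθ ^ 2 / (4 * c ^ 2)) + eS ∧
    fS α β ((k / (2 * c)) * dθ - α) = Q α β :=
  stmt9_general c₁ c₂ k eS hc₁ hc₂ c aθ bθ dθ hc fS hfS Q hQ α β hreg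
end

section
/- If (α, β) ∈ ℝ² satisfies (k/(2c)) d_θ α ≤ β² − α² (the region 𝒰_S), then Q_S^θ(α, β) = 4 c β² − 2 k d_θ α + 2 c₁ k (a_θ α − b_θ β) + c k² (1 − d_θ²/(4c²)) + ē_S. -/
/-- Splay-bend-case context: `c = c₁ + c₂`, `aθ = cos 2θ`, `bθ = sin 2θ`,
`dθ = c₁ aθ − c − c₂`,
`fS α β γ = c(α² + 2β² + γ²) + 2c|αγ − β²| − k dθ (α + γ) + 2c₁ k (aθ α − bθ β) + c k² + ē_S`
and `Q α β = ⨅ γ, fS α β γ`. -/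
theorem stmt10 (c₁ c₂ k θ eS : ℝ) (hc₁ : 0 < c₁) (hc₂ : 0 < c₂)
    (hθ : 0 ≤ θ ∧ θ < Real.pi) (heS : 0 ≤ eS)
    (c aθ bθ dθ : ℝ) (hc : c = c₁ + c₂)
    (haθ : aθ = Real.cos (2 * θ)) (hbθ : bθ = Real.sin (2 * θ))
    (hdθ : dθ = c₁ * aθ - c - c₂)
    (fS : ℝ → ℝ → ℝ → ℝ)
    (hfS : ∀ α β γ : ℝ, fS α β γ =
      c * (α ^ 2 + 2 * β ^ 2 + γ ^ 2) + 2 * c * |α * γ - β ^ 2|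
        - k * dθ * (α + γ) + 2 * c₁ * k * (aθ * α - bθ * β) + c * k ^ 2 + eS)
    (Q : ℝ → ℝ → ℝ) (hQ : ∀ α β : ℝ, Q α β = ⨅ γ : ℝ, fS α β γ)
    (α β : ℝ) (hreg : (k / (2 * c)) * dθ * α ≤ β ^ 2 - α ^ 2) :
    Q α β = 4 * c * β ^ 2 - 2 * k * dθ * α + 2 * c₁ * k * (aθ * α - bθ * β)
      + c * k ^ 2 * (1 - dθ ^ 2 / (4 * c ^ 2)) + eS := by
  have hcpos : 0 < c := by rw [hc]; linarith
  set T : ℝ := 4 * c * β ^ 2 - 2 * k * dθ * α + 2 * c₁ * k * (aθ * α - bθ * β)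
      + c * k ^ 2 * (1 - dθ ^ 2 / (4 * c ^ 2)) + eS with hT
  have hlb : ∀ γ : ℝ, T ≤ fS α β γ := by
    intro γ
    rw [hfS]
    have habs : -(α * γ - β ^ 2) ≤ |α * γ - β ^ 2| := neg_le_abs _
    have hsq : (0:ℝ) ≤ (2 * c * γ - 2 * c * α - k * dθ) ^ 2 := sq_nonneg _
    have h4c : (4 * c : ℝ) ≠ 0 := by positivity
    rw [hT]
    have he : c * k ^ 2 * (1 - dθ ^ 2 / (4 * c ^ 2)) = c * k ^ 2 - k ^ 2 * dθ ^ 2 / (4 * c) := by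
      field_simp
    have hq : k ^ 2 * dθ ^ 2 / (4 * c) * (4 * c) = k ^ 2 * dθ ^ 2 :=
      div_mul_cancel₀ _ (by positivity)
    rw [he]
    nlinarith [habs, hsq, hcpos, hq, mul_le_mul_of_nonneg_left habs (by positivity : (0:ℝ) ≤ 2 * c)]
  have hmin : fS α β (α + k * dθ / (2 * c)) = T := by
    have hγ : α * (α + k * dθ / (2 * c)) - β ^ 2 ≤ 0 := by
      have : α * (α + k * dθ / (2 * c)) - β ^ 2 = (k / (2 * c)) * dθ * α - (β ^ 2 - α ^ 2) := by
        field_simp; ring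
      rw [this]
      linarith
    rw [hfS, abs_of_nonpos hγ, hT]
    field_simp
    ring
  rw [hQ]
  refine le_antisymm ?_ (le_ciInf hlb)
  calc (⨅ γ : ℝ, fS α β γ) ≤ fS α β (α + k * dθ / (2 * c)) :=
        ciInf_le ⟨T, fun x ⟨γ, hγ⟩ => hγ ▸ hlb γ⟩ _
    _ = T := hmin
end

section
/- If (α, β) ∈ ℝ² satisfies β² − α² < (k/(2c)) d_θ α ≤ α² + β² (the region 𝒱_S; note that this forces α ≠ 0), then Q_S^θ(α, β) = c (α² + β²)²/α² − k d_θ (α² + β²)/α + 2 c₁ k (a_θ α − b_θ β) + c k² + ē_S, and the infimum defining Q_S^θ(α, β) is attained at γ = β²/α. -/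
/-!
With `γ₀ = β²/α` and `t = γ - γ₀` one has `|αγ - β²| = |α| |t|`, so the `γ`-dependent part of
`f^S_{α,β}` satisfies `f(γ) - f(γ₀) = c t² + (2cγ₀ - k d_θ) t + 2c|α| |t|`. This is nonnegative as
soon as the slope `|2cγ₀ - k d_θ|` is at most `2c|α|`; multiplied by `|α|`, that condition reads
`|2cβ² - k d_θ α| ≤ 2cα²`, which holds on `𝒱_S`.
-/

open Set

theorem mul_sq_add_mul_add_mul_abs_nonneg {c b r t : ℝ} (hc : 0 ≤ c) (hb : |b| ≤ r) :
    0 ≤ c * t ^ 2 + b * t + r * |t| := by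
  have hbt : -(r * |t|) ≤ b * t := by
    calc -(r * |t|) ≤ -(|b| * |t|) := by gcongr
      _ = -|b * t| := by rw [abs_mul]
      _ ≤ b * t := neg_abs_le _
  nlinarith [mul_nonneg hc (sq_nonneg t)]

theorem isMinOn_mul_sq_add_abs_sub {c p α β : ℝ} (hc : 0 ≤ c) (hα : α ≠ 0)
    (h : |2 * c * β ^ 2 - p * α| ≤ 2 * c * α ^ 2) :
    IsMinOn (fun γ => c * γ ^ 2 + 2 * c * |α * γ - β ^ 2| - p * γ) univ (β ^ 2 / α) := by
  refine isMinOn_univ_iff.mpr fun γ => ?_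
  set γ₀ := β ^ 2 / α
  have hαγ₀ : α * γ₀ = β ^ 2 := mul_div_cancel₀ _ hα
  have hslope : |2 * c * γ₀ - p| ≤ 2 * c * |α| := by
    have hαpos : 0 < |α| := abs_pos.mpr hα
    refine le_of_mul_le_mul_right ?_ hαpos
    calc |2 * c * γ₀ - p| * |α| = |2 * c * β ^ 2 - p * α| := by
          rw [← abs_mul, ← hαγ₀]; ring_nf
      _ ≤ 2 * c * α ^ 2 := h
      _ = 2 * c * |α| * |α| := by rw [mul_assoc (2 * c), abs_mul_abs_self, sq]
  have hdiff := mul_sq_add_mul_add_mul_abs_nonneg (t := γ - γ₀) hc hslope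
  have habs : |α * γ - β ^ 2| = |α| * |γ - γ₀| := by
    rw [← abs_mul, ← hαγ₀, mul_sub]
  simp only [hαγ₀, sub_self, abs_zero, mul_zero, add_zero, habs]
  nlinarith [hdiff]

theorem stmt11_general (c₁ c₂ k eS : ℝ) (hc₁ : 0 < c₁) (hc₂ : 0 < c₂)
    (c aθ bθ dθ : ℝ) (hc : c = c₁ + c₂)
    (fS : ℝ → ℝ → ℝ → ℝ)
    (hfS : ∀ α β γ : ℝ, fS α β γ =
      c * (α ^ 2 + 2 * β ^ 2 + γ ^ 2) + 2 * c * |α * γ - β ^ 2|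
        - k * dθ * (α + γ) + 2 * c₁ * k * (aθ * α - bθ * β) + c * k ^ 2 + eS)
    (Q : ℝ → ℝ → ℝ) (hQ : ∀ α β : ℝ, Q α β = ⨅ γ : ℝ, fS α β γ)
    (α β : ℝ) (hreg₁ : β ^ 2 - α ^ 2 < (k / (2 * c)) * dθ * α)
    (hreg₂ : (k / (2 * c)) * dθ * α ≤ α ^ 2 + β ^ 2) :
    α ≠ 0 ∧
    Q α β = c * (α ^ 2 + β ^ 2) ^ 2 / α ^ 2 - k * dθ * (α ^ 2 + β ^ 2) / α
      + 2 * c₁ * k * (aθ * α - bθ * β) + c * k ^ 2 + eS ∧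
    fS α β (β ^ 2 / α) = Q α β := by
  have hc₀ : 0 < c := hc ▸ add_pos hc₁ hc₂
  have hα : α ≠ 0 := by
    rintro rfl
    nlinarith [sq_nonneg β]
  have hscale : 2 * c * (k / (2 * c) * dθ * α) = k * dθ * α := by field_simp
  have hslope : |2 * c * β ^ 2 - k * dθ * α| ≤ 2 * c * α ^ 2 := by
    have h₁ := mul_lt_mul_of_pos_left hreg₁ (by positivity : (0 : ℝ) < 2 * c)
    have h₂ := mul_le_mul_of_nonneg_left hreg₂ (by positivity : (0 : ℝ) ≤ 2 * c)
    rw [abs_le]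
    constructor <;> linarith
  have hmin : ∀ γ, fS α β (β ^ 2 / α) ≤ fS α β γ := fun γ => by
    have := isMinOn_univ_iff.mp (isMinOn_mul_sq_add_abs_sub hc₀.le hα hslope) γ
    rw [hfS, hfS]
    linarith
  have hQα : Q α β = fS α β (β ^ 2 / α) := by
    rw [hQ]
    exact ciInf_eq_of_forall_ge_of_forall_gt_exists_lt hmin fun _ hw => ⟨_, hw⟩
  refine ⟨hα, ?_, hQα.symm⟩
  rw [hQα, hfS, mul_div_cancel₀ _ hα, sub_self, abs_zero]
  field_simp
  ring

/-- Splay-bend-case context: `c = c₁ + c₂`, `aθ = cos 2θ`, `bθ = sin 2θ`,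
`dθ = c₁ aθ − c − c₂`,
`fS α β γ = c(α² + 2β² + γ²) + 2c|αγ − β²| − k dθ (α + γ) + 2c₁ k (aθ α − bθ β) + c k² + ē_S`
and `Q α β = ⨅ γ, fS α β γ`. -/
theorem stmt11 (c₁ c₂ k θ eS : ℝ) (hc₁ : 0 < c₁) (hc₂ : 0 < c₂)
    (hθ : 0 ≤ θ ∧ θ < Real.pi) (heS : 0 ≤ eS)
    (c aθ bθ dθ : ℝ) (hc : c = c₁ + c₂)
    (haθ : aθ = Real.cos (2 * θ)) (hbθ : bθ = Real.sin (2 * θ))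
    (hdθ : dθ = c₁ * aθ - c - c₂)
    (fS : ℝ → ℝ → ℝ → ℝ)
    (hfS : ∀ α β γ : ℝ, fS α β γ =
      c * (α ^ 2 + 2 * β ^ 2 + γ ^ 2) + 2 * c * |α * γ - β ^ 2|
        - k * dθ * (α + γ) + 2 * c₁ * k * (aθ * α - bθ * β) + c * k ^ 2 + eS)
    (Q : ℝ → ℝ → ℝ) (hQ : ∀ α β : ℝ, Q α β = ⨅ γ : ℝ, fS α β γ)
    (α β : ℝ) (hreg₁ : β ^ 2 - α ^ 2 < (k / (2 * c)) * dθ * α)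
    (hreg₂ : (k / (2 * c)) * dθ * α ≤ α ^ 2 + β ^ 2) :
    α ≠ 0 ∧
    Q α β = c * (α ^ 2 + β ^ 2) ^ 2 / α ^ 2 - k * dθ * (α ^ 2 + β ^ 2) / α
      + 2 * c₁ * k * (aθ * α - bθ * β) + c * k ^ 2 + eS ∧
    fS α β (β ^ 2 / α) = Q α β :=
  stmt11_general c₁ c₂ k eS hc₁ hc₂ c aθ bθ dθ hc fS hfS Q hQ α β hreg₁ hreg₂
end

section
/- Define Q_{S,1}^θ(α, β) = 2 c₁ k (a_θ α − b_θ β) + c k² (1 − d_θ²/(4c²)) + ē_S and Q_{S,2}^θ(α, β) = 4 c β² − 2 k d_θ α + Q_{S,1}^θ(α, β). Then for every (α, β) with α ≠ 0 and β² − α² < (k/(2c)) d_θ α ≤ α² + β², one has Q_S^θ(α, β) = c((α² + β²)/α − k d_θ/(2c))² + Q_{S,1}^θ(α, β) = c((β² − α²)/α − k d_θ/(2c))² + Q_{S,2}^θ(α, β); consequently Q_S^θ is continuous on ℝ². -/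
/-!
Put `m = k dθ / (2c)`. Up to terms in `α, β` only, `f^S_{α,β}(γ)` is
`c ((γ - m)² + 2 |αγ - β²|)`, a parabola plus an absolute-value penalty with its kink at
`γ = β² / α`. With `s = mα - β²`, the minimum over `γ` is `s² / α²`, attained at the kink, when
`|s| ≤ α²`, and `2|s| - α²`, attained at `γ = m ∓ α`, otherwise. Both cases are the single
expression `kinkMin α s`, whose only singular-looking term `max (α² - |s|) 0 ² / α²` lies between
`0` and `α²`; hence `Q_S` is continuous also across `α = 0`.
-/

open Set Filter Topology

theorem Continuous.sq_div_of_le {X : Type*} [TopologicalSpace X] {u v : X → ℝ}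
    (hu : Continuous u) (hv : Continuous v) (hu0 : ∀ x, 0 ≤ u x) (huv : ∀ x, u x ≤ v x) :
    Continuous fun x => u x ^ 2 / v x := by
  refine continuous_iff_continuousAt.2 fun x => ?_
  by_cases hvx : v x = 0
  · have hux : u x = 0 := le_antisymm (hvx ▸ huv x) (hu0 x)
    have hle : ∀ y, u y ^ 2 / v y ≤ u y := fun y => by
      rcases (hu0 y).trans (huv y) |>.eq_or_lt with hv0 | hv0
      · simp [← hv0, hu0 y]
      · rw [div_le_iff₀ hv0, sq]
        exact mul_le_mul_of_nonneg_left (huv y) (hu0 y)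
    have hlim : Tendsto u (𝓝 x) (𝓝 0) := hux ▸ hu.continuousAt
    simpa [ContinuousAt, hux, hvx] using
      squeeze_zero (fun y => div_nonneg (sq_nonneg _) ((hu0 y).trans (huv y))) hle hlim
  · exact (hu.continuousAt.pow 2).div hv.continuousAt hvx

noncomputable def kinkMin (α s : ℝ) : ℝ :=
  2 * |s| - α ^ 2 + max (α ^ 2 - |s|) 0 ^ 2 / α ^ 2

theorem kinkMin_of_abs_le {α s : ℝ} (h : |s| ≤ α ^ 2) : kinkMin α s = s ^ 2 / α ^ 2 := by
  rcases (abs_nonneg s).trans h |>.eq_or_lt with hα | hα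
  · have hs : s = 0 := abs_eq_zero.1 (le_antisymm (hα ▸ h) (abs_nonneg s))
    simp [kinkMin, hs, ← hα]
  · have hα0 : α ≠ 0 := by rintro rfl; simp at hα
    rw [kinkMin, max_eq_left (sub_nonneg.2 h), ← sq_abs s]
    field_simp
    ring

theorem kinkMin_of_le_abs {α s : ℝ} (h : α ^ 2 ≤ |s|) : kinkMin α s = 2 * |s| - α ^ 2 := by
  simp [kinkMin, max_eq_right (sub_nonpos.2 h)]

theorem continuous_kinkMin : Continuous fun p : ℝ × ℝ => kinkMin p.1 p.2 := by
  have hw : Continuous fun p : ℝ × ℝ => max (p.1 ^ 2 - |p.2|) 0 := by fun_prop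
  have hcorr := hw.sq_div_of_le (continuous_fst.pow 2) (fun _ => le_max_right _ _)
    fun p => max_le (sub_le_self _ (abs_nonneg _)) (sq_nonneg _)
  unfold kinkMin
  fun_prop

theorem two_abs_sub_sq_le (m α b γ : ℝ) :
    2 * |m * α - b| - α ^ 2 ≤ (γ - m) ^ 2 + 2 * |α * γ - b| := by
  have htri : |m * α - b| ≤ |α * γ - b| + |α| * |γ - m| := by
    rw [← abs_mul]
    exact (abs_sub_le _ (α * γ) _).trans_eq (by rw [abs_sub_comm, add_comm]; congr 2; ring)
  nlinarith [sq_nonneg (|α| - |γ - m|), sq_abs α, sq_abs (γ - m)]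

theorem sq_div_sq_le {m α b : ℝ} (h : |m * α - b| ≤ α ^ 2) (γ : ℝ) :
    (m * α - b) ^ 2 / α ^ 2 ≤ (γ - m) ^ 2 + 2 * |α * γ - b| := by
  rcases (abs_nonneg (m * α - b)).trans h |>.eq_or_lt with hα | hα
  · rw [← hα, div_zero]
    positivity
  rw [div_le_iff₀ hα]
  -- with `w = αγ - b`, `s = mα - b`: `s² - (α(γ - m))² = 2sw - w² ≤ 2|s||w| ≤ 2α²|w|`
  have hw : (m * α - b) * (α * γ - b) ≤ α ^ 2 * |α * γ - b| :=
    calc (m * α - b) * (α * γ - b) ≤ |m * α - b| * |α * γ - b| := by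
          rw [← abs_mul]; exact le_abs_self _
      _ ≤ α ^ 2 * |α * γ - b| := mul_le_mul_of_nonneg_right h (abs_nonneg _)
  nlinarith [sq_nonneg (α * γ - b)]

theorem isLeast_kinkMin (m α b : ℝ) :
    IsLeast (range fun γ => (γ - m) ^ 2 + 2 * |α * γ - b|) (kinkMin α (m * α - b)) := by
  refine ⟨?_, forall_mem_range.2 fun γ => ?_⟩
  · rcases lt_or_ge |m * α - b| (α ^ 2) with h | h
    · have hα : α ≠ 0 := by rintro rfl; simp at h; linarith [abs_nonneg b]
      refine ⟨b / α, ?_⟩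
      rw [kinkMin_of_abs_le h.le]
      field_simp
      simp
      ring
    · rw [kinkMin_of_le_abs h]
      rcases abs_cases (m * α - b) with ⟨hs, hs0⟩ | ⟨hs, hs0⟩ <;> rw [hs] at h ⊢
      · refine ⟨m - α, ?_⟩
        dsimp only
        rw [abs_of_nonneg (by linear_combination h)]
        ring
      · refine ⟨m + α, ?_⟩
        dsimp only
        rw [abs_of_nonpos (by linear_combination h)]
        ring
  · rcases le_total |m * α - b| (α ^ 2) with h | h
    · rw [kinkMin_of_abs_le h]
      exact sq_div_sq_le h γ
    · rw [kinkMin_of_le_abs h]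
      exact two_abs_sub_sq_le m α b γ

theorem stmt12_general (c₁ c₂ k eS : ℝ) (hc₁ : 0 < c₁) (hc₂ : 0 < c₂)
    (c aθ bθ dθ : ℝ) (hc : c = c₁ + c₂)
    (fS : ℝ → ℝ → ℝ → ℝ)
    (hfS : ∀ α β γ : ℝ, fS α β γ =
      c * (α ^ 2 + 2 * β ^ 2 + γ ^ 2) + 2 * c * |α * γ - β ^ 2|
        - k * dθ * (α + γ) + 2 * c₁ * k * (aθ * α - bθ * β) + c * k ^ 2 + eS)
    (Q : ℝ → ℝ → ℝ) (hQ : ∀ α β : ℝ, Q α β = ⨅ γ : ℝ, fS α β γ)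
    (QS₁ QS₂ : ℝ → ℝ → ℝ)
    (hQS₁ : ∀ α β : ℝ, QS₁ α β =
      2 * c₁ * k * (aθ * α - bθ * β) + c * k ^ 2 * (1 - dθ ^ 2 / (4 * c ^ 2)) + eS)
    (hQS₂ : ∀ α β : ℝ, QS₂ α β = 4 * c * β ^ 2 - 2 * k * dθ * α + QS₁ α β) :
    (∀ α β : ℝ, α ≠ 0 → β ^ 2 - α ^ 2 < (k / (2 * c)) * dθ * α →
      (k / (2 * c)) * dθ * α ≤ α ^ 2 + β ^ 2 →
      Q α β = c * ((α ^ 2 + β ^ 2) / α - k * dθ / (2 * c)) ^ 2 + QS₁ α β ∧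
      Q α β = c * ((β ^ 2 - α ^ 2) / α - k * dθ / (2 * c)) ^ 2 + QS₂ α β) ∧
    Continuous (fun p : ℝ × ℝ => Q p.1 p.2) := by
  have hc0 : 0 < c := hc ▸ add_pos hc₁ hc₂
  set m := k * dθ / (2 * c) with hm
  set R : ℝ → ℝ → ℝ := fun α β => c * (α ^ 2 + 2 * β ^ 2) - 2 * c * m * α - c * m ^ 2
    + 2 * c₁ * k * (aθ * α - bθ * β) + c * k ^ 2 + eS with hR
  have hQ_eq : ∀ α β, Q α β = c * kinkMin α (m * α - β ^ 2) + R α β := by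
    intro α β
    have hfS_eq : fS α β = (fun x => c * x + R α β) ∘
        fun γ => (γ - m) ^ 2 + 2 * |α * γ - β ^ 2| := by
      funext γ
      simp only [hfS, Function.comp, hR, hm]
      field_simp
      ring
    have hmono : Monotone fun x => c * x + R α β := fun x y hxy => by dsimp only; gcongr
    rw [hQ, iInf, hfS_eq, range_comp]
    exact (hmono.map_isLeast (isLeast_kinkMin m α (β ^ 2))).csInf_eq
  refine ⟨fun α β _ hlow hupp => ?_, ?_⟩
  · have hmα : k / (2 * c) * dθ * α = m * α := by ring
    have hs : |m * α - β ^ 2| ≤ α ^ 2 := abs_le.2 ⟨by linarith, by linarith⟩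
    rw [hQ_eq, kinkMin_of_abs_le hs, hQS₂, hQS₁]
    simp only [hR, hm]
    constructor <;> field_simp <;> ring
  · simp only [hQ_eq]
    have hkink : Continuous fun p : ℝ × ℝ => kinkMin p.1 (m * p.1 - p.2 ^ 2) :=
      continuous_kinkMin.comp (f := fun p : ℝ × ℝ => (p.1, m * p.1 - p.2 ^ 2)) (by fun_prop)
    exact (continuous_const.mul hkink).add (by fun_prop)

/-- Splay-bend-case context: `c = c₁ + c₂`, `aθ = cos 2θ`, `bθ = sin 2θ`,
`dθ = c₁ aθ − c − c₂`,
`fS α β γ = c(α² + 2β² + γ²) + 2c|αγ − β²| − k dθ (α + γ) + 2c₁ k (aθ α − bθ β) + c k² + ē_S`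
and `Q α β = ⨅ γ, fS α β γ`. -/
theorem stmt12 (c₁ c₂ k θ eS : ℝ) (hc₁ : 0 < c₁) (hc₂ : 0 < c₂)
    (hθ : 0 ≤ θ ∧ θ < Real.pi) (heS : 0 ≤ eS)
    (c aθ bθ dθ : ℝ) (hc : c = c₁ + c₂)
    (haθ : aθ = Real.cos (2 * θ)) (hbθ : bθ = Real.sin (2 * θ))
    (hdθ : dθ = c₁ * aθ - c - c₂)
    (fS : ℝ → ℝ → ℝ → ℝ)
    (hfS : ∀ α β γ : ℝ, fS α β γ =
      c * (α ^ 2 + 2 * β ^ 2 + γ ^ 2) + 2 * c * |α * γ - β ^ 2|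
        - k * dθ * (α + γ) + 2 * c₁ * k * (aθ * α - bθ * β) + c * k ^ 2 + eS)
    (Q : ℝ → ℝ → ℝ) (hQ : ∀ α β : ℝ, Q α β = ⨅ γ : ℝ, fS α β γ)
    (QS₁ QS₂ : ℝ → ℝ → ℝ)
    (hQS₁ : ∀ α β : ℝ, QS₁ α β =
      2 * c₁ * k * (aθ * α - bθ * β) + c * k ^ 2 * (1 - dθ ^ 2 / (4 * c ^ 2)) + eS)
    (hQS₂ : ∀ α β : ℝ, QS₂ α β = 4 * c * β ^ 2 - 2 * k * dθ * α + QS₁ α β) :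
    (∀ α β : ℝ, α ≠ 0 → β ^ 2 - α ^ 2 < (k / (2 * c)) * dθ * α →
      (k / (2 * c)) * dθ * α ≤ α ^ 2 + β ^ 2 →
      Q α β = c * ((α ^ 2 + β ^ 2) / α - k * dθ / (2 * c)) ^ 2 + QS₁ α β ∧
      Q α β = c * ((β ^ 2 - α ^ 2) / α - k * dθ / (2 * c)) ^ 2 + QS₂ α β) ∧
    Continuous (fun p : ℝ × ℝ => Q p.1 p.2) :=
  stmt12_general c₁ c₂ k eS hc₁ hc₂ c aθ bθ dθ hc fS hfS Q hQ QS₁ QS₂ hQS₁ hQS₂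
end

section
/- Assume k > 0 and set α_θ^S = −(k/2)(1 + cos(2θ)) and β_θ^S = (k/2) sin(2θ). Then Q_S^θ(α_θ^S, β_θ^S) = ē_S, and Q_S^θ(α, β) ≥ ē_S for every (α, β) ∈ ℝ²; in particular min_{ℝ²} Q_S^θ = ē_S. -/
/-- Lower bound for the splay energy density (before adding `ē_S`). -/
lemma aux_lb (c₁ c₂ c k a b α β γ : ℝ) (hc₁ : 0 < c₁) (hc₂ : 0 < c₂)
    (hc : c = c₁ + c₂) (hk : 0 < k) (hab : b ^ 2 + a ^ 2 = 1) :
    0 ≤ c * (α ^ 2 + 2 * β ^ 2 + γ ^ 2) + 2 * c * |α * γ - β ^ 2|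
      - k * (c₁ * a - c - c₂) * (α + γ) + 2 * c₁ * k * (a * α - b * β) + c * k ^ 2 := by
  have hc0 : 0 < c := by rw [hc]; linarith
  have hpp := sq_nonneg (b * α + 2 * a * β - b * γ)
  have h1 : 2 * ((1 - a) * α + 2 * b * β + (1 + a) * γ) * (α + γ)
      = ((1 - a) * α + 2 * b * β + (1 + a) * γ) ^ 2 + 4 * (α * γ - β ^ 2)
        + (b * α + 2 * a * β - b * γ) ^ 2 := by
    linear_combination (-((α - γ) ^ 2 + 4 * β ^ 2)) * hab
  rcases abs_cases (α * γ - β ^ 2) with ⟨habs, hd⟩ | ⟨habs, hd⟩ <;> rw [habs] <;>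
    rcases le_or_gt ((1 - a) * α + 2 * b * β + (1 + a) * γ) 0 with hq | hq
  · nlinarith [mul_nonneg hc0.le (sq_nonneg (α + γ + k)),
      mul_nonneg (mul_pos hc₁ hk).le (neg_nonneg.2 hq)]
  · have hs : (1 - a) * α + 2 * b * β + (1 + a) * γ ≤ 2 * (α + γ) := by nlinarith
    nlinarith [mul_nonneg hc0.le (sq_nonneg (α + γ - k)),
      mul_nonneg (mul_nonneg hc₂.le hk.le) (by nlinarith : (0:ℝ) ≤ α + γ),
      mul_nonneg (mul_pos hc₁ hk).le (by linarith : (0:ℝ) ≤ 2 * (α + γ) - ((1 - a) * α + 2 * b * β + (1 + a) * γ)),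
      mul_pos (mul_pos hc₁ hk) hq]
  · nlinarith [mul_nonneg hc0.le (sq_nonneg (α + γ + k)),
      mul_nonneg (mul_pos hc₁ hk).le (neg_nonneg.2 hq)]
  · have key : c * (α ^ 2 + 2 * β ^ 2 + γ ^ 2) + 2 * c * -(α * γ - β ^ 2)
        - k * (c₁ * a - c - c₂) * (α + γ) + 2 * c₁ * k * (a * α - b * β) + c * k ^ 2
        = c * (α + γ - ((1 - a) * α + 2 * b * β + (1 + a) * γ) + k) ^ 2
          + c * (b * α + 2 * a * β - b * γ) ^ 2
          + (c₁ + 2 * c₂) * (k * ((1 - a) * α + 2 * b * β + (1 + a) * γ)) := by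
      linear_combination (-(c * ((α - γ) ^ 2 + 4 * β ^ 2))) * hab + (k ^ 2 - k * (α + γ) + 2 * k * ((1 - a) * α + 2 * b * β + (1 + a) * γ) - k ^ 2) * hc
    rw [key]
    have := mul_nonneg hc0.le (sq_nonneg (α + γ - ((1 - a) * α + 2 * b * β + (1 + a) * γ) + k))
    have := mul_nonneg hc0.le hpp
    have := mul_pos (by linarith : (0:ℝ) < c₁ + 2 * c₂) (mul_pos hk hq)
    linarith

/-- Splay-bend-case context: `c = c₁ + c₂`, `aθ = cos 2θ`, `bθ = sin 2θ`,
`dθ = c₁ aθ − c − c₂`,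
`fS α β γ = c(α² + 2β² + γ²) + 2c|αγ − β²| − k dθ (α + γ) + 2c₁ k (aθ α − bθ β) + c k² + ē_S`
and `Q α β = ⨅ γ, fS α β γ`. -/
theorem stmt13 (c₁ c₂ k θ eS : ℝ) (hc₁ : 0 < c₁) (hc₂ : 0 < c₂)
    (hθ : 0 ≤ θ ∧ θ < Real.pi) (heS : 0 ≤ eS)
    (c aθ bθ dθ : ℝ) (hc : c = c₁ + c₂)
    (haθ : aθ = Real.cos (2 * θ)) (hbθ : bθ = Real.sin (2 * θ))
    (hdθ : dθ = c₁ * aθ - c - c₂)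
    (fS : ℝ → ℝ → ℝ → ℝ)
    (hfS : ∀ α β γ : ℝ, fS α β γ =
      c * (α ^ 2 + 2 * β ^ 2 + γ ^ 2) + 2 * c * |α * γ - β ^ 2|
        - k * dθ * (α + γ) + 2 * c₁ * k * (aθ * α - bθ * β) + c * k ^ 2 + eS)
    (Q : ℝ → ℝ → ℝ) (hQ : ∀ α β : ℝ, Q α β = ⨅ γ : ℝ, fS α β γ)
    (hk : 0 < k) (αS βS : ℝ)
    (hαS : αS = -((k / 2) * (1 + Real.cos (2 * θ))))
    (hβS : βS = (k / 2) * Real.sin (2 * θ)) :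
    Q αS βS = eS ∧ ∀ α β : ℝ, eS ≤ Q α β := by
  have pyth := Real.sin_sq_add_cos_sq (2 * θ)
  have hlow : ∀ α β γ : ℝ, eS ≤ fS α β γ := by
    intro α β γ
    have h := aux_lb c₁ c₂ c k aθ bθ α β γ hc₁ hc₂ hc hk
      (by rw [haθ, hbθ]; exact pyth)
    rw [hfS, hdθ]; linarith
  set γS : ℝ := -((k / 2) * (1 - Real.cos (2 * θ))) with hγS
  have hdet : αS * γS - βS ^ 2 = 0 := by
    rw [hαS, hβS, hγS]; linear_combination (-(k ^ 2 / 4)) * pyth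
  have hval : fS αS βS γS = eS := by
    rw [hfS, hdet, abs_zero, hαS, hβS, hγS, hdθ, haθ, hbθ, hc]
    linear_combination (k ^ 2 * (c₂ - c₁) / 2) * pyth
  have hbdd : BddBelow (Set.range (fun γ => fS αS βS γ)) := by
    refine ⟨eS, ?_⟩
    rintro x ⟨γ, rfl⟩
    exact hlow _ _ γ
  constructor
  · rw [hQ]
    exact le_antisymm ((ciInf_le hbdd γS).trans hval.le) (le_ciInf fun γ => hlow _ _ γ)
  · intro α β
    rw [hQ]
    exact le_ciInf fun γ => hlow _ _ γ
end

section
/- Assume k > 0 and set α_θ^S = −(k/2)(1 + cos(2θ)) and β_θ^S = (k/2) sin(2θ). If (α, β) ∈ ℝ² satisfies Q_S^θ(α, β) = ē_S, then (α, β) = (α_θ^S, β_θ^S); that is, (α_θ^S, β_θ^S) is the unique global minimiser of Q_S^θ. -/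
set_option maxHeartbeats 1000000 in
/-- Splay-bend-case context: `c = c₁ + c₂`, `aθ = cos 2θ`, `bθ = sin 2θ`,
`dθ = c₁ aθ − c − c₂`,
`fS α β γ = c(α² + 2β² + γ²) + 2c|αγ − β²| − k dθ (α + γ) + 2c₁ k (aθ α − bθ β) + c k² + ē_S`
and `Q α β = ⨅ γ, fS α β γ`. -/
theorem stmt14 (c₁ c₂ k θ eS : ℝ) (hc₁ : 0 < c₁) (hc₂ : 0 < c₂)
    (hθ : 0 ≤ θ ∧ θ < Real.pi) (heS : 0 ≤ eS)
    (c aθ bθ dθ : ℝ) (hc : c = c₁ + c₂)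
    (haθ : aθ = Real.cos (2 * θ)) (hbθ : bθ = Real.sin (2 * θ))
    (hdθ : dθ = c₁ * aθ - c - c₂)
    (fS : ℝ → ℝ → ℝ → ℝ)
    (hfS : ∀ α β γ : ℝ, fS α β γ =
      c * (α ^ 2 + 2 * β ^ 2 + γ ^ 2) + 2 * c * |α * γ - β ^ 2|
        - k * dθ * (α + γ) + 2 * c₁ * k * (aθ * α - bθ * β) + c * k ^ 2 + eS)
    (Q : ℝ → ℝ → ℝ) (hQ : ∀ α β : ℝ, Q α β = ⨅ γ : ℝ, fS α β γ)
    (hk : 0 < k) (αS βS : ℝ)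
    (hαS : αS = -((k / 2) * (1 + Real.cos (2 * θ))))
    (hβS : βS = (k / 2) * Real.sin (2 * θ)) :
    (∀ α β : ℝ, Q α β = eS → α = αS ∧ β = βS) ∧
    {p : ℝ × ℝ | ∀ q : ℝ × ℝ, Q p.1 p.2 ≤ Q q.1 q.2} = {(αS, βS)} := by
  have htrig : Real.sin (2 * θ) ^ 2 + Real.cos (2 * θ) ^ 2 = 1 :=
    Real.sin_sq_add_cos_sq (2 * θ)
  subst hc haθ hbθ hdθ hαS hβS
  set co := Real.cos (2 * θ) with hco
  set s := Real.sin (2 * θ) with hs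
  set αS : ℝ := -((k / 2) * (1 + co)) with hαS
  set βS : ℝ := (k / 2) * s with hβS
  have hcpos : (0 : ℝ) < c₁ + c₂ := by linarith
  -- key pointwise lower bound
  have key : ∀ α β γ : ℝ,
      eS + c₁ * (α - αS) ^ 2 + 2 * c₁ * (β - βS) ^ 2 ≤ fS α β γ := by
    intro α β γ
    rw [hfS]
    have hA0 : (0 : ℝ) ≤ |α * γ - β ^ 2| := abs_nonneg _
    have hA1 : α * γ - β ^ 2 ≤ |α * γ - β ^ 2| := le_abs_self _
    have main : 4 * (c₁ + c₂) *
        ((c₁ + c₂) * (α ^ 2 + 2 * β ^ 2 + γ ^ 2)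
          + 2 * (c₁ + c₂) * |α * γ - β ^ 2|
          - k * (c₁ * co - (c₁ + c₂) - c₂) * (α + γ)
          + 2 * c₁ * k * (co * α - s * β) + (c₁ + c₂) * k ^ 2 + eS
          - (eS + c₁ * (α - αS) ^ 2 + 2 * c₁ * (β - βS) ^ 2)) =
        4 * c₁ * c₂ * (α - αS) ^ 2
          + (2 * (c₁ + c₂) * γ - k * (c₁ * co - (c₁ + c₂) - c₂) + 2 * c₂ * α) ^ 2
          + 8 * (c₁ + c₂) * c₁ * |α * γ - β ^ 2|
          + 8 * (c₁ + c₂) * c₂ * (|α * γ - β ^ 2| - (α * γ - β ^ 2)) := by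
      rw [hαS, hβS]
      linear_combination (-2 * (c₁ + c₂) * c₁ * k ^ 2) * htrig
    have h0 : (0:ℝ) ≤ 4 * c₁ * c₂ * (α - αS) ^ 2
          + (2 * (c₁ + c₂) * γ - k * (c₁ * co - (c₁ + c₂) - c₂) + 2 * c₂ * α) ^ 2
          + 8 * (c₁ + c₂) * c₁ * |α * γ - β ^ 2|
          + 8 * (c₁ + c₂) * c₂ * (|α * γ - β ^ 2| - (α * γ - β ^ 2)) := by
      have t1 : (0:ℝ) ≤ 4 * c₁ * c₂ * (α - αS) ^ 2 := by positivity
      have t2 : (0:ℝ) ≤ (2 * (c₁ + c₂) * γ - k * (c₁ * co - (c₁ + c₂) - c₂) + 2 * c₂ * α) ^ 2 :=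
        sq_nonneg _
      have t3 : (0:ℝ) ≤ 8 * (c₁ + c₂) * c₁ * |α * γ - β ^ 2| := by positivity
      have t4 : (0:ℝ) ≤ 8 * (c₁ + c₂) * c₂ * (|α * γ - β ^ 2| - (α * γ - β ^ 2)) :=
        mul_nonneg (by positivity) (sub_nonneg.2 hA1)
      linarith
    rw [← main] at h0
    nlinarith [h0, hcpos]
  have hbdd : ∀ α β : ℝ, BddBelow (Set.range (fS α β)) := by
    intro α β
    refine ⟨eS, ?_⟩
    rintro x ⟨γ, rfl⟩
    have := key α β γ
    have u1 : (0:ℝ) ≤ c₁ * (α - αS) ^ 2 := by positivity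
    have u2 : (0:ℝ) ≤ 2 * c₁ * (β - βS) ^ 2 := by positivity
    linarith
  have hQge : ∀ α β : ℝ, eS + c₁ * (α - αS) ^ 2 + 2 * c₁ * (β - βS) ^ 2 ≤ Q α β := by
    intro α β
    rw [hQ]
    exact le_ciInf (key α β)
  have hQge' : ∀ α β : ℝ, eS ≤ Q α β := by
    intro α β
    have := hQge α β
    have u1 : (0:ℝ) ≤ c₁ * (α - αS) ^ 2 := by positivity
    have u2 : (0:ℝ) ≤ 2 * c₁ * (β - βS) ^ 2 := by positivity
    linarith
  -- value at the minimiser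
  have hQS : Q αS βS = eS := by
    refine le_antisymm ?_ (hQge' _ _)
    rw [hQ]
    refine le_trans (ciInf_le (hbdd _ _) (-((k / 2) * (1 - co)))) ?_
    rw [hfS]
    have hdet : αS * (-((k / 2) * (1 - co))) - βS ^ 2 = 0 := by
      rw [hαS, hβS]
      linear_combination (-(k ^ 2) / 4) * htrig
    rw [hdet, abs_zero]
    rw [hαS, hβS]
    linear_combination ((c₁ + c₂) * k ^ 2 / 2 - c₁ * k ^ 2) * htrig
  have uniq : ∀ α β : ℝ, Q α β = eS → α = αS ∧ β = βS := by
    intro α β h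
    have h1 := hQge α β
    rw [h] at h1
    have u1 : (0:ℝ) ≤ c₁ * (α - αS) ^ 2 := by positivity
    have u2 : (0:ℝ) ≤ 2 * c₁ * (β - βS) ^ 2 := by positivity
    have v1 : c₁ * (α - αS) ^ 2 = 0 := by linarith
    have v2 : 2 * c₁ * (β - βS) ^ 2 = 0 := by linarith
    have hα : (α - αS) ^ 2 = 0 := by
      rcases mul_eq_zero.mp v1 with h' | h'
      · exact absurd h' (ne_of_gt hc₁)
      · exact h'
    have hβ : (β - βS) ^ 2 = 0 := by
      rcases mul_eq_zero.mp v2 with h' | h'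
      · nlinarith
      · exact h'
    constructor
    · have := pow_eq_zero_iff (n := 2) (by norm_num) |>.mp hα
      linarith [this]
    · have := pow_eq_zero_iff (n := 2) (by norm_num) |>.mp hβ
      linarith [this]
  refine ⟨uniq, ?_⟩
  ext ⟨p₁, p₂⟩
  simp only [Set.mem_setOf_eq, Set.mem_singleton_iff, Prod.mk.injEq]
  constructor
  · intro hp
    have h1 : Q p₁ p₂ ≤ Q αS βS := hp (αS, βS)
    rw [hQS] at h1
    have h2 : Q p₁ p₂ = eS := le_antisymm h1 (hQge' _ _)
    exact uniq _ _ h2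
  · rintro ⟨rfl, rfl⟩
    intro q
    rw [hQS]
    exact hQge' _ _
end

section
/- For every α ≠ 0 and every β ∈ ℝ, setting γ₁ = (k/(2c)) d_θ − α and γ₂ = (k/(2c)) d_θ + α, the following two algebraic identities hold: f^S_{α,β}(γ₁) − f^S_{α,β}(β²/α) = −c[(α² + β²)/α − k d_θ/(2c)]², provided αγ₁ > β², and f^S_{α,β}(γ₂) − f^S_{α,β}(β²/α) = −c[(β² − α²)/α − k d_θ/(2c)]², provided αγ₂ < β². In particular, in the respective regimes, f^S_{α,β}(γ₁) ≤ f^S_{α,β}(β²/α) with equality iff (k/(2c)) d_θ α = α² + β², and f^S_{α,β}(γ₂) ≤ f^S_{α,β}(β²/α) with equality iff (k/(2c)) d_θ α = β² − α². -/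
/-- Splay-bend-case context: `c = c₁ + c₂`, `aθ = cos 2θ`, `bθ = sin 2θ`,
`dθ = c₁ aθ − c − c₂`,
`fS α β γ = c(α² + 2β² + γ²) + 2c|αγ − β²| − k dθ (α + γ) + 2c₁ k (aθ α − bθ β) + c k² + ē_S`
and `Q α β = ⨅ γ, fS α β γ`. -/
theorem stmt15 (c₁ c₂ k θ eS : ℝ) (hc₁ : 0 < c₁) (hc₂ : 0 < c₂)
    (hθ : 0 ≤ θ ∧ θ < Real.pi) (heS : 0 ≤ eS)
    (c aθ bθ dθ : ℝ) (hc : c = c₁ + c₂)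
    (haθ : aθ = Real.cos (2 * θ)) (hbθ : bθ = Real.sin (2 * θ))
    (hdθ : dθ = c₁ * aθ - c - c₂)
    (fS : ℝ → ℝ → ℝ → ℝ)
    (hfS : ∀ α β γ : ℝ, fS α β γ =
      c * (α ^ 2 + 2 * β ^ 2 + γ ^ 2) + 2 * c * |α * γ - β ^ 2|
        - k * dθ * (α + γ) + 2 * c₁ * k * (aθ * α - bθ * β) + c * k ^ 2 + eS)
    (Q : ℝ → ℝ → ℝ) (hQ : ∀ α β : ℝ, Q α β = ⨅ γ : ℝ, fS α β γ)
    (α β : ℝ) (hα : α ≠ 0) (γ₁ γ₂ : ℝ)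
    (hγ₁ : γ₁ = (k / (2 * c)) * dθ - α) (hγ₂ : γ₂ = (k / (2 * c)) * dθ + α) :
    (α * γ₁ > β ^ 2 →
      fS α β γ₁ - fS α β (β ^ 2 / α)
        = -(c * ((α ^ 2 + β ^ 2) / α - k * dθ / (2 * c)) ^ 2)) ∧
    (α * γ₂ < β ^ 2 →
      fS α β γ₂ - fS α β (β ^ 2 / α)
        = -(c * ((β ^ 2 - α ^ 2) / α - k * dθ / (2 * c)) ^ 2)) ∧
    (α * γ₁ > β ^ 2 →
      fS α β γ₁ ≤ fS α β (β ^ 2 / α) ∧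
      (fS α β γ₁ = fS α β (β ^ 2 / α) ↔ (k / (2 * c)) * dθ * α = α ^ 2 + β ^ 2)) ∧
    (α * γ₂ < β ^ 2 →
      fS α β γ₂ ≤ fS α β (β ^ 2 / α) ∧
      (fS α β γ₂ = fS α β (β ^ 2 / α) ↔ (k / (2 * c)) * dθ * α = β ^ 2 - α ^ 2)) := by

  have hcpos : 0 < c := by rw [hc]; linarith
  have hc0 : c ≠ 0 := ne_of_gt hcpos
  have habs0 : |α * (β ^ 2 / α) - β ^ 2| = 0 := by
    rw [mul_div_cancel₀ _ hα, sub_self, abs_zero]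
  have h1 : α * γ₁ > β ^ 2 →
      fS α β γ₁ - fS α β (β ^ 2 / α)
        = -(c * ((α ^ 2 + β ^ 2) / α - k * dθ / (2 * c)) ^ 2) := by
    intro h
    have habs1 : |α * γ₁ - β ^ 2| = α * γ₁ - β ^ 2 := abs_of_pos (by linarith)
    rw [hfS, hfS, habs0, habs1, hγ₁]
    field_simp
    ring
  have h2 : α * γ₂ < β ^ 2 →
      fS α β γ₂ - fS α β (β ^ 2 / α)
        = -(c * ((β ^ 2 - α ^ 2) / α - k * dθ / (2 * c)) ^ 2) := by
    intro h
    have habs2 : |α * γ₂ - β ^ 2| = -(α * γ₂ - β ^ 2) := abs_of_neg (by linarith)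
    rw [hfS, hfS, habs0, habs2, hγ₂]
    field_simp
    ring
  refine ⟨h1, h2, ?_, ?_⟩
  · intro h
    have e := h1 h
    set E := (α ^ 2 + β ^ 2) / α - k * dθ / (2 * c) with hE
    have key : E = 0 ↔ (k / (2 * c)) * dθ * α = α ^ 2 + β ^ 2 := by
      rw [hE, sub_eq_zero]
      constructor
      · intro hh
        field_simp at hh
        field_simp
        linarith
      · intro hh
        field_simp at hh
        field_simp
        linarith
    constructor
    · nlinarith [sq_nonneg E]
    · rw [← sub_eq_zero, e, neg_eq_zero, mul_eq_zero, ← key]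
      constructor
      · rintro (h' | h')
        · exact absurd h' hc0
        · exact pow_eq_zero_iff (n := 2) (by norm_num) |>.mp h'
      · intro h'; right; rw [h']; ring
  · intro h
    have e := h2 h
    set E := (β ^ 2 - α ^ 2) / α - k * dθ / (2 * c) with hE
    have key : E = 0 ↔ (k / (2 * c)) * dθ * α = β ^ 2 - α ^ 2 := by
      rw [hE, sub_eq_zero]
      constructor
      · intro hh
        field_simp at hh
        field_simp
        linarith
      · intro hh
        field_simp at hh
        field_simp
        linarith
    constructor
    · nlinarith [sq_nonneg E]
    · rw [← sub_eq_zero, e, neg_eq_zero, mul_eq_zero, ← key]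
      constructor
      · rintro (h' | h')
        · exact absurd h' hc0
        · exact pow_eq_zero_iff (n := 2) (by norm_num) |>.mp h'
      · intro h'; right; rw [h']; ring
end

section
/- Let μ ∈ (0,1) and λ₁, λ₂ ∈ ℝ with μ = |λ₁|/(|λ₁| + |λ₂|) (assuming λ₁, λ₂ not both zero), let M = diag(λ₁, λ₂), and let χ : ℝ → {0,1} be the 1-periodic extension of the characteristic function of (0, μ). Define Mₙ(x) = χ(nx)(λ₁/μ) e₁⊗e₁ + (1 − χ(nx))(λ₂/(1−μ)) e₂⊗e₂ for x in a bounded open interval I. Then det Mₙ(x) = 0 for all x and n, Mₙ converges to the constant M weakly-* in L^∞(I, ℝ^{2×2}_{sym}), and for a.e. x, |Mₙ(x)|² = λ₁²/μ + λ₂²/(1−μ) = |M|² + 2|det M|. -/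
/-!
Subtracting its mean turns `χ` into a bounded 1-periodic function with bounded primitive, so
`∫_c^d (χ(nx) - μ) dx = O(1/n)` on every interval. Since the oscillations are uniformly bounded
and intervals generate the Borel sets, this extends by density to every integrable test function:
`χ(n·) ⇀ μ` weakly-*, hence the laminate `χ(n·) A + (1 - χ(n·)) B` converges to `μ A + (1 - μ) B`.
Pointwise `Mₙ(x)` is diagonal with a single nonzero entry, `λ₁/μ` or `λ₂/(1-μ)`, both of modulus
`|λ₁| + |λ₂|`; this gives the determinant and the norm identities.
-/

open MeasureTheory Set Filter Topology
open scoped ENNReal symmDiff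

namespace Function.Periodic

variable {h : ℝ → ℝ} {T : ℝ}

theorem periodic_primitive (hper : Periodic h T)
    (hint : ∀ c d, IntervalIntegrable h volume c d) (hmean : ∫ x in 0..T, h x = 0) :
    Periodic (fun y => ∫ x in 0..y, h x) T := fun y => by
  simp only [hper.intervalIntegral_add_eq_add 0 y hint, zero_add, hmean, add_zero]

theorem exists_norm_primitive_le (hper : Periodic h T) (hT : T ≠ 0)
    (hint : IntervalIntegrable h volume 0 T) (hmean : ∫ x in 0..T, h x = 0) :
    ∃ K, ∀ y, ‖∫ x in 0..y, h x‖ ≤ K := by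
  have hint' := hper.intervalIntegrable₀ hT hint
  obtain ⟨K, hK⟩ := isBounded_iff_forall_norm_le.1 <|
    (hper.periodic_primitive hint' hmean).isBounded_of_continuous hT
      (intervalIntegral.continuous_primitive hint' 0)
  exact ⟨K, fun y => hK _ (mem_range_self y)⟩

/-- The primitive of a mean-zero periodic function is bounded, so rescaling by `n` makes its
increments `O(1/n)`. -/
theorem tendsto_intervalIntegral_comp_mul (hper : Periodic h T) (hT : T ≠ 0)
    (hint : IntervalIntegrable h volume 0 T) (hmean : ∫ x in 0..T, h x = 0) (c d : ℝ) :
    Tendsto (fun n : ℕ => ∫ x in c..d, h (n * x)) atTop (𝓝 0) := by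
  obtain ⟨K, hK⟩ := hper.exists_norm_primitive_le hT hint hmean
  have hint' := hper.intervalIntegrable₀ hT hint
  refine squeeze_zero_norm' ?_ (tendsto_const_div_atTop_nhds_zero_nat (2 * K))
  filter_upwards [eventually_ne_atTop 0] with n hn
  rw [intervalIntegral.integral_comp_mul_left _ (Nat.cast_ne_zero.2 hn),
    ← intervalIntegral.integral_interval_sub_left (hint' 0 _) (hint' 0 _), norm_smul,
    norm_inv, Real.norm_natCast, inv_mul_eq_div]
  gcongr
  linarith [norm_sub_le (∫ x in 0..n * d, h x) (∫ x in 0..n * c, h x), hK (n * d), hK (n * c)]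

theorem tendsto_setIntegral_Ioc_comp_mul (hper : Periodic h T) (hT : T ≠ 0)
    (hint : IntervalIntegrable h volume 0 T) (hmean : ∫ x in 0..T, h x = 0) (c d : ℝ) :
    Tendsto (fun n : ℕ => ∫ x in Ioc c d, h (n * x)) atTop (𝓝 0) := by
  rcases le_total c d with hcd | hdc
  · simp_rw [← intervalIntegral.integral_of_le hcd]
    exact hper.tendsto_intervalIntegral_comp_mul hT hint hmean c d
  · simp [Ioc_eq_empty_of_le hdc]

end Function.Periodic

section WeakConvergence

variable {α : Type*} {mα : MeasurableSpace α} {ν : Measure α} {w : ℕ → α → ℝ} {K : ℝ}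

theorem norm_integral_mul_le_mul_eLpNorm {v f : α → ℝ}
    (hK : ∀ x, ‖v x‖ ≤ K) (hf : Integrable f ν) :
    ‖∫ x, v x * f x ∂ν‖ ≤ K * (eLpNorm f 1 ν).toReal := by
  rw [eLpNorm_one_eq_lintegral_enorm, ← integral_norm_eq_lintegral_enorm hf.1,
    ← integral_const_mul]
  refine norm_integral_le_of_norm_le (hf.norm.const_mul K) (ae_of_all _ fun x => ?_)
  rw [norm_mul]
  exact mul_le_mul_of_nonneg_right (hK x) (norm_nonneg _)

theorem tendsto_integral_mul_of_approx (hw_meas : ∀ n, AEStronglyMeasurable (w n) ν)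
    (hw_bdd : ∀ n x, ‖w n x‖ ≤ K) {f : α → ℝ} (hf : Integrable f ν)
    (happrox : ∀ δ : ℝ≥0∞, δ ≠ 0 → ∃ g, eLpNorm (f - g) 1 ν ≤ δ ∧
      (Integrable g ν ∧ Tendsto (fun n => ∫ x, w n x * g x ∂ν) atTop (𝓝 0))) :
    Tendsto (fun n => ∫ x, w n x * f x ∂ν) atTop (𝓝 0) := by
  rw [Metric.tendsto_atTop]
  intro ε hε
  obtain ⟨δ, hδ, hKδ⟩ := exists_pos_mul_lt (half_pos hε) |K|
  obtain ⟨g, hfg, hg, hg_lim⟩ := happrox (ENNReal.ofReal δ) (by simpa using hδ)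
  obtain ⟨N, hN⟩ := Metric.tendsto_atTop.1 hg_lim (ε / 2) (half_pos hε)
  refine ⟨N, fun n hn => ?_⟩
  have hsplit : ∫ x, w n x * f x ∂ν = ∫ x, w n x * (f - g) x ∂ν + ∫ x, w n x * g x ∂ν := by
    rw [← integral_add]
    · simp [mul_sub]
    · exact (hf.sub hg).bdd_mul (hw_meas n) (ae_of_all _ (hw_bdd n))
    · exact hg.bdd_mul (hw_meas n) (ae_of_all _ (hw_bdd n))
  have hfar : ‖∫ x, w n x * (f - g) x ∂ν‖ ≤ |K| * δ :=
    (norm_integral_mul_le_mul_eLpNorm (hw_bdd n) (hf.sub hg)).trans <|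
      mul_le_mul (le_abs_self K) (ENNReal.toReal_le_of_le_ofReal hδ.le hfg) ENNReal.toReal_nonneg
        (abs_nonneg K)
  have hnear := hN n hn
  rw [dist_zero_right] at hnear ⊢
  rw [hsplit]
  linarith [norm_add_le (∫ x, w n x * (f - g) x ∂ν) (∫ x, w n x * g x ∂ν)]

theorem tendsto_setIntegral_of_mem_supClosure {C : Set (Set α)} (hC : IsSetSemiring C)
    (hCm : ∀ s ∈ C, MeasurableSet s) (hw_int : ∀ n, Integrable (w n) ν)
    (hlim : ∀ s ∈ C, Tendsto (fun n => ∫ x in s, w n x ∂ν) atTop (𝓝 0))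
    {t : Set α} (ht : t ∈ supClosure C) :
    Tendsto (fun n => ∫ x in t, w n x ∂ν) atTop (𝓝 0) := by
  obtain ⟨P, hPC⟩ := hC.mem_supClosure_iff.1 ht
  have ht_eq : ⋃ p ∈ P.parts, p = t := (Finset.sup_set_eq_biUnion _ _).symm.trans P.sup_parts
  have hsum : ∀ n, ∫ x in t, w n x ∂ν = ∑ p ∈ P.parts, ∫ x in p, w n x ∂ν := fun n => by
    have := integral_biUnion_finset _ (fun p hp => hCm p (hPC hp)) P.disjoint
      (fun p _ => (hw_int n).integrableOn)
    rwa [ht_eq] at this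
  simp_rw [hsum]
  simpa using tendsto_finsetSum P.parts fun p hp => hlim p (hPC hp)

theorem tendsto_integral_mul_of_tendsto_setIntegral [IsFiniteMeasure ν] {C : Set (Set α)}
    (hC : IsSetSemiring C) (hcover : ∃ D ⊆ C, D.Countable ∧ ν (⋃₀ D)ᶜ = 0)
    (hgen : mα = MeasurableSpace.generateFrom C) (hw_meas : ∀ n, AEStronglyMeasurable (w n) ν)
    (hw_bdd : ∀ n x, ‖w n x‖ ≤ K)
    (hlim : ∀ s ∈ C, Tendsto (fun n => ∫ x in s, w n x ∂ν) atTop (𝓝 0))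
    {f : α → ℝ} (hf : Integrable f ν) :
    Tendsto (fun n => ∫ x, w n x * f x ∂ν) atTop (𝓝 0) := by
  have hw_int n : Integrable (w n) ν :=
    (integrable_const (1 : ℝ)).bdd_mul (c := K) (hw_meas n) (ae_of_all _ (hw_bdd n)) |>.congr
      (by simp)
  have hCm : ∀ s ∈ supClosure C, MeasurableSet s := fun s hs => by
    rw [hgen]; exact measurableSet_generateFrom_of_mem_supClosure hs
  obtain ⟨D, hDC, hD, hDν⟩ := hcover
  refine tendsto_integral_mul_of_approx hw_meas hw_bdd hf fun δ hδ =>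
    (memLp_one_iff_integrable.2 hf).induction_dense ENNReal.one_ne_top
      (fun g => Integrable g ν ∧ Tendsto (fun n => ∫ x, w n x * g x ∂ν) atTop (𝓝 0)) ?_ ?_
      (fun g hg => hg.1.1) hδ
  · intro c s hs _ ε hε
    obtain ⟨η, hη, hηc⟩ := ENNReal.exists_pos_mul_lt (enorm_ne_top (x := c)) hε
    obtain ⟨t, ht, hts⟩ := exists_measure_symmDiff_lt_of_generateFrom_isSetSemiring hC
      ⟨D, hD, hDC, hDν⟩ hgen hs hη
    refine ⟨t.indicator fun _ => c, ?_, (integrable_const c).indicator (hCm t ht), ?_⟩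
    · rw [eLpNorm_indicator_sub_indicator, eLpNorm_indicator_const ((hCm t ht).symmDiff hs)
        one_ne_zero ENNReal.one_ne_top]
      simp only [ENNReal.toReal_one, div_one, ENNReal.rpow_one]
      rw [mul_comm]
      exact (mul_le_mul_left hts.le _).trans hηc.le
    · have hindicator n :
          ∫ x, w n x * t.indicator (fun _ => c) x ∂ν = (∫ x in t, w n x ∂ν) * c := by
        rw [← integral_mul_const, ← integral_indicator (hCm t ht)]
        congr 1 with x
        by_cases hx : x ∈ t <;> simp [hx]
      simp_rw [hindicator]
      simpa using (tendsto_setIntegral_of_mem_supClosure hC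
        (fun s hs => hCm s (subset_supClosure hs)) hw_int hlim ht).mul_const c
  · rintro g₁ g₂ ⟨hg₁, hlim₁⟩ ⟨hg₂, hlim₂⟩
    refine ⟨hg₁.add hg₂, ?_⟩
    have hadd n : ∫ x, w n x * (g₁ + g₂) x ∂ν =
        ∫ x, w n x * g₁ x ∂ν + ∫ x, w n x * g₂ x ∂ν := by
      rw [← integral_add (hg₁.bdd_mul (hw_meas n) (ae_of_all _ (hw_bdd n)))
        (hg₂.bdd_mul (hw_meas n) (ae_of_all _ (hw_bdd n)))]
      simp [mul_add]
    simp_rw [hadd]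
    simpa using hlim₁.add hlim₂

end WeakConvergence

theorem tendsto_integral_mul_of_tendsto_setIntegral_Ioc {ν : Measure ℝ} [IsFiniteMeasure ν]
    {w : ℕ → ℝ → ℝ} {K : ℝ} (hw_meas : ∀ n, AEStronglyMeasurable (w n) ν)
    (hw_bdd : ∀ n x, ‖w n x‖ ≤ K)
    (hlim : ∀ u v, Tendsto (fun n => ∫ x in Ioc u v, w n x ∂ν) atTop (𝓝 0))
    {f : ℝ → ℝ} (hf : Integrable f ν) :
    Tendsto (fun n => ∫ x, w n x * f x ∂ν) atTop (𝓝 0) := by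
  refine tendsto_integral_mul_of_tendsto_setIntegral IsSetSemiring.Ioc ?_ ?_ hw_meas hw_bdd
    (by rintro - ⟨u, v, -, rfl⟩; exact hlim u v) hf
  · refine ⟨range fun n : ℤ => Ioc (n : ℝ) (n + 1), ?_, countable_range _, ?_⟩
    · rintro - ⟨n, rfl⟩
      exact ⟨n, n + 1, by linarith, rfl⟩
    · simp [sUnion_range, iUnion_Ioc_intCast]
  · refine BorelSpace.measurable_eq.trans <| (borel_eq_generateFrom_Ioc_le ℝ).trans ?_
    congr 1 with s
    exact exists₂_congr fun u v => and_congr_right' eq_comm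

theorem tendsto_setIntegral_comp_mul_mul {h : ℝ → ℝ} {T K : ℝ} (hper : Function.Periodic h T)
    (hT : T ≠ 0) (hmeas : Measurable h) (hbdd : ∀ x, ‖h x‖ ≤ K) {a b : ℝ} {f : ℝ → ℝ}
    (hf : IntegrableOn f (Ioc a b)) :
    Tendsto (fun n : ℕ => ∫ x in Ioc a b, h (n * x) * f x) atTop
      (𝓝 ((T⁻¹ * ∫ x in 0..T, h x) * ∫ x in Ioc a b, f x)) := by
  set m := T⁻¹ * ∫ x in 0..T, h x
  have hint : IntervalIntegrable h volume 0 T :=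
    intervalIntegrable_const.mono_fun' hmeas.aestronglyMeasurable (ae_of_all _ hbdd)
  have hmean : ∫ x in 0..T, (h x - m) = 0 := by
    rw [intervalIntegral.integral_sub hint intervalIntegrable_const]
    simp [m, hT]
  have hw_meas (n : ℕ) : Measurable fun x => h (n * x) - m :=
    (hmeas.comp (measurable_id.const_mul _)).sub_const m
  have hw_bdd (n : ℕ) (x : ℝ) : ‖h (n * x) - m‖ ≤ K + ‖m‖ :=
    (norm_sub_le _ _).trans (add_le_add_left (hbdd _) _)
  have hlim (u v : ℝ) : Tendsto
      (fun n : ℕ => ∫ x in Ioc u v, (h (n * x) - m) ∂volume.restrict (Ioc a b)) atTop (𝓝 0) := by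
    simp_rw [Measure.restrict_restrict measurableSet_Ioc, Ioc_inter_Ioc]
    have hper' : Function.Periodic (fun x => h x - m) T := fun x => by simp only [hper x]
    exact hper'.tendsto_setIntegral_Ioc_comp_mul hT (hint.sub intervalIntegrable_const) hmean _ _
  have hosc := tendsto_integral_mul_of_tendsto_setIntegral_Ioc
    (fun n => (hw_meas n).aestronglyMeasurable) hw_bdd hlim hf
  have hsplit (n : ℕ) : ∫ x in Ioc a b, h (n * x) * f x =
      (∫ x in Ioc a b, (h (n * x) - m) * f x) + m * ∫ x in Ioc a b, f x := by
    have hint_n : Integrable (fun x => (h (n * x) - m) * f x) (volume.restrict (Ioc a b)) :=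
      hf.bdd_mul (hw_meas n).aestronglyMeasurable (ae_of_all _ (hw_bdd n))
    rw [← integral_const_mul, ← integral_add hint_n (hf.const_mul m)]
    congr 1 with x
    ring
  simp_rw [hsplit]
  simpa using hosc.add_const (m * ∫ x in Ioc a b, f x)

noncomputable def periodicIndicator (μ x : ℝ) : ℝ := if Int.fract x ∈ Ioo 0 μ then 1 else 0

section periodicIndicator

variable {μ : ℝ}

theorem periodicIndicator_periodic : Function.Periodic (periodicIndicator μ) 1 := fun x => by
  simp only [periodicIndicator, Int.fract_add_one]

theorem measurable_periodicIndicator : Measurable (periodicIndicator μ) :=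
  Measurable.ite (measurable_fract measurableSet_Ioo) measurable_const measurable_const

theorem periodicIndicator_eq_zero_or_eq_one (μ x : ℝ) :
    periodicIndicator μ x = 0 ∨ periodicIndicator μ x = 1 := by
  unfold periodicIndicator
  split_ifs <;> simp

theorem norm_periodicIndicator_le (x : ℝ) : ‖periodicIndicator μ x‖ ≤ 1 := by
  rcases periodicIndicator_eq_zero_or_eq_one μ x with h | h <;> simp [h]

theorem intervalIntegral_periodicIndicator (h0 : 0 ≤ μ) (h1 : μ ≤ 1) :
    ∫ x in 0..1, periodicIndicator μ x = μ := by
  have heq : EqOn (periodicIndicator μ) ((Ioo 0 μ).indicator 1) (Ioo 0 1) := fun x hx => by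
    simp [periodicIndicator, indicator, Int.fract_eq_self.2 ⟨hx.1.le, hx.2⟩]
  rw [intervalIntegral.integral_of_le zero_le_one, integral_Ioc_eq_integral_Ioo,
    setIntegral_congr_fun measurableSet_Ioo heq, integral_indicator_one measurableSet_Ioo]
  simp [Measure.real, Measure.restrict_apply measurableSet_Ioo, Ioo_inter_Ioo, h0, h1]

theorem tendsto_integral_periodicIndicator_laminate (h0 : 0 ≤ μ) (h1 : μ ≤ 1) {a b : ℝ}
    {F G : ℝ → ℝ} (hF : IntegrableOn F (Ioc a b)) (hG : IntegrableOn G (Ioc a b)) :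
    Tendsto (fun n : ℕ => ∫ x in Ioc a b,
        (periodicIndicator μ (n * x) * F x + (1 - periodicIndicator μ (n * x)) * G x)) atTop
      (𝓝 (∫ x in Ioc a b, (μ * F x + (1 - μ) * G x))) := by
  have hosc := tendsto_setIntegral_comp_mul_mul (periodicIndicator_periodic (μ := μ)) one_ne_zero
    measurable_periodicIndicator norm_periodicIndicator_le (hF.sub hG)
  rw [intervalIntegral_periodicIndicator h0 h1, inv_one, one_mul] at hosc
  have hsplit (n : ℕ) : ∫ x in Ioc a b,
      (periodicIndicator μ (n * x) * F x + (1 - periodicIndicator μ (n * x)) * G x) =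
        (∫ x in Ioc a b, periodicIndicator μ (n * x) * (F - G) x) + ∫ x in Ioc a b, G x := by
    have hint : IntegrableOn (fun x => periodicIndicator μ (n * x) * (F - G) x) (Ioc a b) :=
      (hF.sub hG).bdd_mul
        (measurable_periodicIndicator.comp (measurable_id.const_mul _)).aestronglyMeasurable
        (ae_of_all _ fun x => norm_periodicIndicator_le _)
    rw [← integral_add hint hG]
    congr 1 with x
    simp only [Pi.sub_apply]
    ring
  have hlimit : ∫ x in Ioc a b, (μ * F x + (1 - μ) * G x) =
      μ * (∫ x in Ioc a b, (F - G) x) + ∫ x in Ioc a b, G x := by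
    rw [← integral_const_mul, ← integral_add ((hF.sub hG).const_mul μ) hG]
    congr 1 with x
    simp only [Pi.sub_apply]
    ring
  simp_rw [hsplit, hlimit]
  exact hosc.add_const _

end periodicIndicator

theorem Matrix.smul_single_add_smul_single_eq_diagonal {R : Type*} [Semiring R] (p q : R) :
    p • Matrix.single (0 : Fin 2) 0 (1 : R) + q • Matrix.single 1 1 1 =
      Matrix.diagonal ![p, q] := by
  ext i j
  fin_cases i <;> fin_cases j <;> simp

theorem Matrix.sum_sum_diagonal_mul {n R : Type*} [Fintype n] [DecidableEq n]
    [NonUnitalNonAssocSemiring R] (d : n → R) (N : Matrix n n R) :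
    ∑ i, ∑ j, Matrix.diagonal d i j * N i j = ∑ i, d i * N i i := by
  simp [Matrix.diagonal_apply, ite_mul]

theorem sq_div_eq_sq_abs_add_abs {μ l₁ l₂ : ℝ} (hμ : μ ∈ Ioo (0 : ℝ) 1)
    (hrel : μ = |l₁| / (|l₁| + |l₂|)) :
    (l₁ / μ) ^ 2 = (|l₁| + |l₂|) ^ 2 ∧ (l₂ / (1 - μ)) ^ 2 = (|l₁| + |l₂|) ^ 2 ∧
      l₁ ^ 2 / μ + l₂ ^ 2 / (1 - μ) = (|l₁| + |l₂|) ^ 2 := by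
  set s := |l₁| + |l₂|
  have hs : s ≠ 0 := fun hs => hμ.1.ne' (by rw [hrel, hs, div_zero])
  have h₁ : l₁ ^ 2 = (μ * s) ^ 2 := by rw [← sq_abs, hrel, div_mul_cancel₀ _ hs]
  have h₂ : l₂ ^ 2 = ((1 - μ) * s) ^ 2 := by
    rw [← sq_abs, hrel, sub_mul, div_mul_cancel₀ _ hs, one_mul]; ring
  have hμ₀ : μ ≠ 0 := hμ.1.ne'
  have hμ₁ : 1 - μ ≠ 0 := (sub_pos.2 hμ.2).ne'
  refine ⟨?_, ?_, ?_⟩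
  · rw [div_pow, h₁]; field_simp
  · rw [div_pow, h₂]; field_simp
  · rw [h₁, h₂]; field_simp; ring

theorem stmt17_general (μ l₁ l₂ : ℝ) (hμ : μ ∈ Set.Ioo (0 : ℝ) 1)
    (hrel : μ = |l₁| / (|l₁| + |l₂|))
    (a b : ℝ) (I : Set ℝ) (hI : I = Set.Ioo a b)
    (χ : ℝ → ℝ) (hχ : ∀ x : ℝ, χ x = if Int.fract x ∈ Set.Ioo 0 μ then 1 else 0)
    (M : Matrix (Fin 2) (Fin 2) ℝ) (hM : M = Matrix.diagonal ![l₁, l₂])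
    (Mn : ℕ → ℝ → Matrix (Fin 2) (Fin 2) ℝ)
    (hMn : ∀ (n : ℕ) (x : ℝ), Mn n x =
      (χ (n * x) * (l₁ / μ)) • Matrix.single (0 : Fin 2) (0 : Fin 2) (1 : ℝ)
        + ((1 - χ (n * x)) * (l₂ / (1 - μ))) •
            Matrix.single (1 : Fin 2) (1 : Fin 2) (1 : ℝ)) :
    (∀ (n : ℕ) (x : ℝ), (Mn n x).det = 0) ∧
    (∀ N : ℝ → Matrix (Fin 2) (Fin 2) ℝ,
      (∀ i j : Fin 2, Integrable (fun x => N x i j) (volume.restrict I)) →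
      Filter.Tendsto (fun n => ∫ x in I, ∑ i, ∑ j, Mn n x i j * N x i j)
        Filter.atTop (nhds (∫ x in I, ∑ i, ∑ j, M i j * N x i j))) ∧
    (∀ n : ℕ, ∀ᵐ x ∂(volume.restrict I),
      (∑ i, ∑ j, (Mn n x i j) ^ 2) = l₁ ^ 2 / μ + l₂ ^ 2 / (1 - μ) ∧
      (∑ i, ∑ j, (Mn n x i j) ^ 2) = (∑ i, ∑ j, (M i j) ^ 2) + 2 * |M.det|) := by
  obtain rfl : χ = periodicIndicator μ := funext hχ
  simp only [Matrix.smul_single_add_smul_single_eq_diagonal] at hMn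
  obtain ⟨hsq₁, hsq₂, hsum⟩ := sq_div_eq_sq_abs_add_abs hμ hrel
  have hfrob : l₁ ^ 2 + l₂ ^ 2 + 2 * (|l₁| * |l₂|) = (|l₁| + |l₂|) ^ 2 := by
    rw [← sq_abs l₁, ← sq_abs l₂]; ring
  subst hI hM
  refine ⟨fun n x => ?_, fun N hN => ?_, fun n => ae_of_all _ fun x => ?_⟩
  · rcases periodicIndicator_eq_zero_or_eq_one μ (n * x) with h | h <;>
      simp [hMn, h]
  · rw [Measure.restrict_congr_set Ioo_ae_eq_Ioc] at hN ⊢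
    simp_rw [hMn, Matrix.sum_sum_diagonal_mul, Fin.sum_univ_two]
    convert tendsto_integral_periodicIndicator_laminate hμ.1.le hμ.2.le
      ((hN 0 0).const_mul (l₁ / μ)) ((hN 1 1).const_mul (l₂ / (1 - μ))) using 3 with n <;>
      funext x <;> simp only [Matrix.cons_val_zero, Matrix.cons_val_one]
    · ring
    · field_simp [hμ.1.ne', (sub_pos.2 hμ.2).ne']
  · rcases periodicIndicator_eq_zero_or_eq_one μ (n * x) with h | h <;>
      simp [hMn, h, Fin.sum_univ_two] <;> constructor <;> linarith

/-- The oscillating laminate construction: with `μ = |λ₁|/(|λ₁| + |λ₂|) ∈ (0,1)`,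
`M = diag(λ₁, λ₂)` and `χ` the 1-periodic extension of the characteristic function of `(0, μ)`,
the matrices `Mₙ(x) = χ(nx)(λ₁/μ) e₁⊗e₁ + (1 − χ(nx))(λ₂/(1−μ)) e₂⊗e₂` have zero determinant,
converge to `M` weakly-* in `L^∞` (tested against integrable matrix fields), and satisfy
`|Mₙ(x)|² = λ₁²/μ + λ₂²/(1−μ) = |M|² + 2|det M|` a.e. -/
theorem stmt17 (μ l₁ l₂ : ℝ) (hμ : μ ∈ Set.Ioo (0 : ℝ) 1) (hne : ¬(l₁ = 0 ∧ l₂ = 0))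
    (hrel : μ = |l₁| / (|l₁| + |l₂|))
    (a b : ℝ) (hab : a < b) (I : Set ℝ) (hI : I = Set.Ioo a b)
    (χ : ℝ → ℝ) (hχ : ∀ x : ℝ, χ x = if Int.fract x ∈ Set.Ioo 0 μ then 1 else 0)
    (M : Matrix (Fin 2) (Fin 2) ℝ) (hM : M = Matrix.diagonal ![l₁, l₂])
    (Mn : ℕ → ℝ → Matrix (Fin 2) (Fin 2) ℝ)
    (hMn : ∀ (n : ℕ) (x : ℝ), Mn n x =
      (χ (n * x) * (l₁ / μ)) • Matrix.single (0 : Fin 2) (0 : Fin 2) (1 : ℝ)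
        + ((1 - χ (n * x)) * (l₂ / (1 - μ))) •
            Matrix.single (1 : Fin 2) (1 : Fin 2) (1 : ℝ)) :
    (∀ (n : ℕ) (x : ℝ), (Mn n x).det = 0) ∧
    (∀ N : ℝ → Matrix (Fin 2) (Fin 2) ℝ,
      (∀ i j : Fin 2, Integrable (fun x => N x i j) (volume.restrict I)) →
      Filter.Tendsto (fun n => ∫ x in I, ∑ i, ∑ j, Mn n x i j * N x i j)
        Filter.atTop (nhds (∫ x in I, ∑ i, ∑ j, M i j * N x i j))) ∧
    (∀ n : ℕ, ∀ᵐ x ∂(volume.restrict I),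
      (∑ i, ∑ j, (Mn n x i j) ^ 2) = l₁ ^ 2 / μ + l₂ ^ 2 / (1 - μ) ∧
      (∑ i, ∑ j, (Mn n x i j) ^ 2) = (∑ i, ∑ j, (M i j) ^ 2) + 2 * |M.det|) :=
  stmt17_general μ l₁ l₂ hμ hrel a b I hI χ hχ M hM Mn hMn
end
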